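/- arXiv:math/0406420 — 6 statements merged into one kernel-verified Lean document; each statement's English description precedes it below -/
import Mathlib

section
/- Let A = (A_1,…,A_n) be a doubly stochastic n-tuple that is a local minimizer of the mixed discriminant over D_n, with hermitian R, reals μ_i and positive semidefinite P_i satisfying Q_i = R + μ_i I + P_i and A_iP_i = P_iA_i = 0 as in the first-order optimality conditions. Then: (i) D(A) = tr(A_i Q_i) = tr(A_i(R+μ_i I)) for each i; (ii) ⟨A_i ω, (R+μ_i I)ω⟩ = ⟨A_i ω, Q_i ω⟩ for every ω ∈ C^n and each i; (iii) D(A) = Σ_{i=1}^n ⟨A_i ω, (R+μ_i I)ω⟩ for every unit vector ω ∈ C^n. -/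
open Matrix BigOperators Finset ComplexOrder Nat

/-- The mixed discriminant of an `n`-tuple of complex `n × n` matrices:
`D(A₁,…,Aₙ) = Σ_{σ,τ ∈ Sₙ} sgn(στ) Π_i A_i (σ i) (τ i)`. -/
noncomputable def mixedDisc {n : ℕ} (A : Fin n → Matrix (Fin n) (Fin n) ℂ) : ℂ :=
  ∑ σ : Equiv.Perm (Fin n), ∑ τ : Equiv.Perm (Fin n),
    ((Equiv.Perm.sign (σ * τ) : ℤ) : ℂ) * ∏ i : Fin n, A i (σ i) (τ i)

/-- An `n`-tuple of hermitian matrices is doubly stochastic if each `A i` is positive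
semidefinite, each has trace `1`, and they sum to the identity. -/
def DoublyStochasticTuple {n : ℕ} (A : Fin n → Matrix (Fin n) (Fin n) ℂ) : Prop :=
  (∀ i, (A i).PosSemidef) ∧ (∀ i, (A i).trace = 1) ∧ ∑ i, A i = 1

/-- The standard inner product on `ℂⁿ`: `⟨u, v⟩ = Σᵢ conj(uᵢ) vᵢ`. -/
noncomputable def cInner {n : ℕ} (u v : Fin n → ℂ) : ℂ := star u ⬝ᵥ v

lemma mixedDisc_update {n : ℕ} (A : Fin n → Matrix (Fin n) (Fin n) ℂ)
    (i : Fin n) (X : Matrix (Fin n) (Fin n) ℂ) :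
    mixedDisc (Function.update A i X) =
      ∑ σ : Equiv.Perm (Fin n), ∑ τ : Equiv.Perm (Fin n),
        ((Equiv.Perm.sign (σ * τ) : ℤ) : ℂ) *
          (X (σ i) (τ i) * ∏ j ∈ univ.erase i, A j (σ j) (τ j)) := by
  unfold mixedDisc
  refine Finset.sum_congr rfl fun σ _ => Finset.sum_congr rfl fun τ _ => ?_
  congr 1
  rw [← Finset.mul_prod_erase univ _ (mem_univ i)]
  congr 1
  · simp
  · exact Finset.prod_congr rfl fun j hj => by
      rw [Function.update_of_ne (Finset.ne_of_mem_erase hj)]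

lemma Q_entry {n : ℕ} (A : Fin n → Matrix (Fin n) (Fin n) ℂ)
    (Q : Matrix (Fin n) (Fin n) ℂ) (i : Fin n)
    (hQ : ∀ X, mixedDisc (Function.update A i X) = (X * Q).trace)
    (a b : Fin n) :
    Q b a = ∑ σ : Equiv.Perm (Fin n), ∑ τ : Equiv.Perm (Fin n),
      (if σ i = a ∧ τ i = b then
        ((Equiv.Perm.sign (σ * τ) : ℤ) : ℂ) * ∏ j ∈ univ.erase i, A j (σ j) (τ j)
       else 0) := by
  have h := hQ (Matrix.single a b 1)
  rw [mixedDisc_update] at h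
  have htr : ((Matrix.single a b 1 : Matrix (Fin n) (Fin n) ℂ) * Q).trace = Q b a := by
    simp [Matrix.trace, Matrix.diag, Matrix.mul_apply, Matrix.single, ite_and,
      Finset.sum_ite_eq]
  rw [htr] at h
  rw [← h]
  refine Finset.sum_congr rfl fun σ _ => Finset.sum_congr rfl fun τ _ => ?_
  by_cases h1 : σ i = a ∧ τ i = b
  · simp [Matrix.single, h1.1, h1.2]
  · have : Matrix.single a b (1:ℂ) (σ i) (τ i) = 0 := by
      simp only [Matrix.single, Matrix.of_apply]
      rw [if_neg]
      rintro ⟨h2, h3⟩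
      exact h1 ⟨h2.symm, h3.symm⟩
    simp [this, h1]

lemma key_diag {n : ℕ} (A : Fin n → Matrix (Fin n) (Fin n) ℂ) (q : Fin n) :
    ∑ i : Fin n, ∑ σ : Equiv.Perm (Fin n), ∑ τ : Equiv.Perm (Fin n),
      (if σ i = q then
        ((Equiv.Perm.sign (σ * τ) : ℤ) : ℂ) *
          (A i q (τ i) * ∏ j ∈ univ.erase i, A j (σ j) (τ j))
       else 0) = mixedDisc A := by
  have h : ∀ (i : Fin n) (σ τ : Equiv.Perm (Fin n)),
      (if σ i = q then
        ((Equiv.Perm.sign (σ * τ) : ℤ) : ℂ) *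
          (A i q (τ i) * ∏ j ∈ univ.erase i, A j (σ j) (τ j)) else 0)
      = (if i = σ.symm q then
          ((Equiv.Perm.sign (σ * τ) : ℤ) : ℂ) * ∏ j : Fin n, A j (σ j) (τ j) else 0) := by
    intro i σ τ
    by_cases h : σ i = q
    · rw [if_pos h, if_pos (by rw [← h, Equiv.symm_apply_apply])]
      rw [← Finset.mul_prod_erase univ (fun j => A j (σ j) (τ j)) (mem_univ i)]
      rw [← h]
    · rw [if_neg h, if_neg (fun hh => h (by rw [hh, Equiv.apply_symm_apply]))]
  simp_rw [h]
  rw [Finset.sum_comm]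
  unfold mixedDisc
  refine Finset.sum_congr rfl fun σ _ => ?_
  rw [Finset.sum_comm]
  refine Finset.sum_congr rfl fun τ _ => ?_
  simp

lemma key_offdiag {n : ℕ} (A : Fin n → Matrix (Fin n) (Fin n) ℂ) (p q : Fin n)
    (hpq : p ≠ q) :
    ∑ i : Fin n, ∑ σ : Equiv.Perm (Fin n), ∑ τ : Equiv.Perm (Fin n),
      (if σ i = q then
        ((Equiv.Perm.sign (σ * τ) : ℤ) : ℂ) *
          (A i p (τ i) * ∏ j ∈ univ.erase i, A j (σ j) (τ j))
       else 0) = 0 := by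
  have key0 : ∑ z : Fin n × Equiv.Perm (Fin n) × Equiv.Perm (Fin n),
      (if z.2.1 z.1 = q then
        ((Equiv.Perm.sign (z.2.1 * z.2.2) : ℤ) : ℂ) *
          (A z.1 p (z.2.2 z.1) * ∏ j ∈ univ.erase z.1, A j (z.2.1 j) (z.2.2 j))
       else 0) = 0 := by
    apply Finset.sum_ninvolution
      (g := fun z : Fin n × Equiv.Perm (Fin n) × Equiv.Perm (Fin n) =>
        if z.2.1 z.1 = q then
          ((z.2.1.symm p, Equiv.swap p q * z.2.1, z.2.2) :
            Fin n × Equiv.Perm (Fin n) × Equiv.Perm (Fin n))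
        else z)
    · rintro ⟨i, σ, τ⟩
      dsimp only
      by_cases h : σ i = q
      · rw [if_pos h, if_pos h]
        set k := σ.symm p with hk
        have hσk : σ k = p := Equiv.apply_symm_apply σ p
        have hcond : (Equiv.swap p q * σ) k = q := by
          rw [Equiv.Perm.mul_apply, hσk, Equiv.swap_apply_left]
        dsimp only
        rw [if_pos hcond]
        have hki : k ≠ i := fun hh => hpq (by rw [← hσk, hh, h])
        have hsign : ((Equiv.Perm.sign (Equiv.swap p q * σ * τ) : ℤ) : ℂ)
            = -((Equiv.Perm.sign (σ * τ) : ℤ) : ℂ) := by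
          rw [mul_assoc, Equiv.Perm.sign_mul (Equiv.swap p q), Equiv.Perm.sign_swap hpq]
          push_cast
          ring
        have hprod : A i p (τ i) * ∏ j ∈ univ.erase i, A j (σ j) (τ j)
            = A k p (τ k) * ∏ j ∈ univ.erase k, A j ((Equiv.swap p q * σ) j) (τ j) := by
          have hkmem : k ∈ univ.erase i := Finset.mem_erase.2 ⟨hki, mem_univ k⟩
          have himem : i ∈ univ.erase k := Finset.mem_erase.2 ⟨fun hh => hki hh.symm, mem_univ i⟩
          rw [← Finset.mul_prod_erase (univ.erase i) _ hkmem,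
              ← Finset.mul_prod_erase (univ.erase k) _ himem]
          have h1 : (Equiv.swap p q * σ) i = p := by
            rw [Equiv.Perm.mul_apply, h, Equiv.swap_apply_right]
          have h2 : ∏ j ∈ (univ.erase k).erase i, A j ((Equiv.swap p q * σ) j) (τ j)
              = ∏ j ∈ (univ.erase k).erase i, A j (σ j) (τ j) := by
            refine Finset.prod_congr rfl fun j hj => ?_
            have hji : j ≠ i := (Finset.mem_erase.1 hj).1
            have hjk : j ≠ k := (Finset.mem_erase.1 (Finset.mem_erase.1 hj).2).1
            rw [Equiv.Perm.mul_apply, Equiv.swap_apply_of_ne_of_ne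
              (fun hh => hjk (by rw [← hσk] at hh; exact σ.injective hh))
              (fun hh => hji (by rw [← h] at hh; exact σ.injective hh))]
          rw [h1, h2, hσk, Finset.erase_right_comm]
          ring
        rw [hsign, hprod]
        ring
      · rw [if_neg h, if_neg h]
        dsimp only
        rw [if_neg h]
        ring
    · rintro ⟨i, σ, τ⟩ hne
      dsimp only at hne ⊢
      by_cases h : σ i = q
      · rw [if_pos h]
        intro heq
        have h21 := congrArg (fun w : Fin n × Equiv.Perm (Fin n) × Equiv.Perm (Fin n) =>
          w.2.1 i) heq
        simp only [Equiv.Perm.mul_apply, h, Equiv.swap_apply_right] at h21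
        exact hpq h21
      · rw [if_neg h] at hne
        exact absurd rfl hne
    · exact fun _ => mem_univ _
    · rintro ⟨i, σ, τ⟩
      dsimp only
      by_cases h : σ i = q
      · rw [if_pos h]
        have hcond : (Equiv.swap p q * σ) (σ.symm p) = q := by
          rw [Equiv.Perm.mul_apply, Equiv.apply_symm_apply, Equiv.swap_apply_left]
        dsimp only
        rw [if_pos hcond]
        refine Prod.ext ?_ (Prod.ext ?_ rfl)
        · show (Equiv.swap p q * σ).symm p = i
          rw [Equiv.symm_apply_eq, Equiv.Perm.mul_apply, h, Equiv.swap_apply_right]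
        · show Equiv.swap p q * (Equiv.swap p q * σ) = σ
          rw [← mul_assoc, Equiv.swap_mul_self, one_mul]
      · rw [if_neg h]
        dsimp only
        rw [if_neg h]
  simpa only [Fintype.sum_prod_type] using key0

lemma sum_mul_Q {n : ℕ} (A Q : Fin n → Matrix (Fin n) (Fin n) ℂ)
    (hQ : ∀ (i : Fin n) (X : Matrix (Fin n) (Fin n) ℂ),
      mixedDisc (Function.update A i X) = (X * Q i).trace) :
    ∑ i, A i * Q i = mixedDisc A • (1 : Matrix (Fin n) (Fin n) ℂ) := by
  ext p q
  rw [Matrix.sum_apply]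
  have hterm : ∀ i : Fin n, (A i * Q i) p q
      = ∑ σ : Equiv.Perm (Fin n), ∑ τ : Equiv.Perm (Fin n),
        (if σ i = q then
          ((Equiv.Perm.sign (σ * τ) : ℤ) : ℂ) *
            (A i p (τ i) * ∏ j ∈ univ.erase i, A j (σ j) (τ j))
         else 0) := by
    intro i
    rw [Matrix.mul_apply]
    have hQe : ∀ b, Q i b q = ∑ σ : Equiv.Perm (Fin n), ∑ τ : Equiv.Perm (Fin n),
        (if σ i = q ∧ τ i = b then
          ((Equiv.Perm.sign (σ * τ) : ℤ) : ℂ) * ∏ j ∈ univ.erase i, A j (σ j) (τ j)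
         else 0) := fun b => Q_entry A (Q i) i (hQ i) q b
    simp_rw [hQe, Finset.mul_sum]
    rw [Finset.sum_comm]
    refine Finset.sum_congr rfl fun σ _ => ?_
    rw [Finset.sum_comm]
    refine Finset.sum_congr rfl fun τ _ => ?_
    by_cases h : σ i = q
    · simp only [h, true_and, mul_ite, mul_zero]
      rw [Finset.sum_ite_eq univ (τ i) (fun b => A i p b * _)]
      simp only [mem_univ, if_true]
      ring
    · simp [h]
  simp_rw [hterm]
  by_cases hpq : p = q
  · subst hpq
    rw [key_diag]
    simp [Matrix.one_apply]
  · rw [key_offdiag A p q hpq]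
    simp [Matrix.one_apply, hpq]

lemma sum_mulVec' {n : ℕ} (M : Fin n → Matrix (Fin n) (Fin n) ℂ) (v : Fin n → ℂ) :
    (∑ i, M i) *ᵥ v = ∑ i, (M i *ᵥ v) := by
  ext x
  simp only [Matrix.mulVec, dotProduct, Finset.sum_apply, Matrix.sum_apply,
    Finset.sum_mul]
  rw [Finset.sum_comm]

/-- Consequences of the first-order optimality conditions at a local minimizer `A` of the
mixed discriminant over doubly stochastic tuples, where `Q i = R + μ i • I + P i` with
`A i * P i = P i * A i = 0`:
(i) `D(A) = tr(A i * Q i) = tr(A i * (R + μ i • I))` for each `i`;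
(ii) `⟨A i ω, (R + μ i • I) ω⟩ = ⟨A i ω, Q i ω⟩` for every `ω` and each `i`;
(iii) `D(A) = Σ i ⟨A i ω, (R + μ i • I) ω⟩` for every unit vector `ω`. -/
theorem localMin_optimality_consequences {n : ℕ}
    (A Q : Fin n → Matrix (Fin n) (Fin n) ℂ)
    (hA : DoublyStochasticTuple A)
    (hQ : ∀ (i : Fin n) (X : Matrix (Fin n) (Fin n) ℂ),
      mixedDisc (Function.update A i X) = (X * Q i).trace)
    (hmin : IsLocalMinOn (fun B => (mixedDisc B).re)
      {B : Fin n → Matrix (Fin n) (Fin n) ℂ | DoublyStochasticTuple B} A)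
    (R : Matrix (Fin n) (Fin n) ℂ) (μ : Fin n → ℝ) (P : Fin n → Matrix (Fin n) (Fin n) ℂ)
    (hR : R.IsHermitian) (hP : ∀ i, (P i).PosSemidef)
    (hAP : ∀ i, A i * P i = 0 ∧ P i * A i = 0)
    (hQRP : ∀ i, Q i = R + (μ i : ℂ) • (1 : Matrix (Fin n) (Fin n) ℂ) + P i) :
    (∀ i, mixedDisc A = (A i * Q i).trace ∧
        mixedDisc A = (A i * (R + (μ i : ℂ) • (1 : Matrix (Fin n) (Fin n) ℂ))).trace) ∧
    (∀ (i : Fin n) (ω : Fin n → ℂ),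
        cInner ((A i).mulVec ω) ((R + (μ i : ℂ) • (1 : Matrix (Fin n) (Fin n) ℂ)).mulVec ω) =
          cInner ((A i).mulVec ω) ((Q i).mulVec ω)) ∧
    (∀ ω : Fin n → ℂ, cInner ω ω = 1 →
        mixedDisc A =
          ∑ i, cInner ((A i).mulVec ω)
            ((R + (μ i : ℂ) • (1 : Matrix (Fin n) (Fin n) ℂ)).mulVec ω)) := by
  have hherm : ∀ i, (A i).IsHermitian := fun i => (hA.1 i).1
  have hD : ∀ i, mixedDisc A = (A i * Q i).trace := by
    intro i
    have := hQ i (A i)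
    rwa [Function.update_eq_self] at this
  have hzero : ∀ (i : Fin n) (ω : Fin n → ℂ),
      cInner ((A i).mulVec ω) ((P i).mulVec ω) = 0 := by
    intro i ω
    unfold cInner
    rw [Matrix.star_mulVec, (hherm i).eq, ← Matrix.dotProduct_mulVec,
      Matrix.mulVec_mulVec, (hAP i).1]
    simp
  have part2 : ∀ (i : Fin n) (ω : Fin n → ℂ),
      cInner ((A i).mulVec ω) ((R + (μ i : ℂ) • (1 : Matrix (Fin n) (Fin n) ℂ)).mulVec ω) =
        cInner ((A i).mulVec ω) ((Q i).mulVec ω) := by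
    intro i ω
    rw [hQRP i]
    unfold cInner
    rw [Matrix.add_mulVec (R + (μ i : ℂ) • (1 : Matrix (Fin n) (Fin n) ℂ)) (P i),
      dotProduct_add]
    have h0 := hzero i ω
    unfold cInner at h0
    rw [h0, add_zero]
  refine ⟨?_, part2, ?_⟩
  · intro i
    refine ⟨hD i, ?_⟩
    rw [hD i, hQRP i, mul_add, Matrix.trace_add, (hAP i).1, Matrix.trace_zero, add_zero]
  · intro ω hω
    have hsum := sum_mul_Q A Q hQ
    calc mixedDisc A = mixedDisc A * (star ω ⬝ᵥ ω) := by
            unfold cInner at hω; rw [hω, mul_one]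
      _ = star ω ⬝ᵥ ((mixedDisc A • (1 : Matrix (Fin n) (Fin n) ℂ)) *ᵥ ω) := by
            rw [Matrix.smul_mulVec, Matrix.one_mulVec, dotProduct_smul,
              smul_eq_mul]
      _ = star ω ⬝ᵥ ((∑ i, A i * Q i) *ᵥ ω) := by rw [hsum]
      _ = ∑ i, star ω ⬝ᵥ ((A i * Q i) *ᵥ ω) := by
            rw [sum_mulVec']
            simp only [dotProduct, Finset.sum_apply, Finset.mul_sum]
            rw [Finset.sum_comm]
      _ = ∑ i, cInner ((A i).mulVec ω) ((Q i).mulVec ω) := by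
            refine Finset.sum_congr rfl fun i _ => ?_
            unfold cInner
            rw [Matrix.star_mulVec, (hherm i).eq, ← Matrix.dotProduct_mulVec,
              Matrix.mulVec_mulVec]
      _ = ∑ i, cInner ((A i).mulVec ω)
            ((R + (μ i : ℂ) • (1 : Matrix (Fin n) (Fin n) ℂ)).mulVec ω) := by
            exact Finset.sum_congr rfl fun i _ => (part2 i ω).symm
end

section
/- Let A = (A_1, A_2, (1/n)I, …, (1/n)I) be a doubly stochastic n-tuple, i.e. A_1, A_2 are positive semidefinite hermitian with tr A_1 = tr A_2 = 1 and A_1 + A_2 = (2/n)I. Then the mixed discriminant satisfies D(A) = n!/n^n + (n−2)!/n^{n−2} · tr((A_1 − (1/n)I)(A_1 − (1/n)I)*). -/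
/-!
Indices start at `0`, so the paper's `A₁, A₂` are `A 0, A 1`. Substituting `τ = σρ`,
`D(A) = Σ_σ Σ_ρ sgn ρ Π_i A_i(σ i, σ (ρ i))`. If `A_i = c • 1` for `i ≥ 2`, a term survives
only when `ρ` fixes every `i ≥ 2`, i.e. `ρ ∈ {1, (0 1)}`, so the inner sum is `c^(n-2)` times
the minor `A₀(σ0,σ0) A₁(σ1,σ1) - A₀(σ0,σ1) A₁(σ1,σ0)`. Every ordered pair `(j, l)` with
`j ≠ l` is `(σ 0, σ 1)` for exactly `(n-2)!` permutations, whence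
`D(A) = c^(n-2) (n-2)! (tr A₀ tr A₁ - tr (A₀ A₁))`. With `c = 1/n`, `tr A₀ = tr A₁ = 1` and
`A₁ = (2/n) • 1 - A₀`, this is the claimed identity.
-/

open Matrix BigOperators Finset ComplexOrder Nat

open Equiv Equiv.Perm

section PermSums

variable {M : Type*} [AddCommMonoid M]

theorem sum_perm_apply_zero (k : ℕ) (f : Fin (k + 1) → M) :
    ∑ σ : Perm (Fin (k + 1)), f (σ 0) = k ! • ∑ j, f j := by
  rw [← decomposeFin.symm.sum_comp, Fintype.sum_prod_type]
  simp [decomposeFin_symm_apply_zero, smul_sum, Fintype.card_perm]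

theorem sum_swap_zero_succ_add {k : ℕ} (f : Fin (k + 1) → M) (p : Fin (k + 1)) :
    f p + ∑ q : Fin k, f (swap 0 p q.succ) = ∑ j, f j := by
  rw [← Equiv.sum_comp (swap 0 p) f, Fin.sum_univ_succ, swap_apply_left]

theorem sum_perm_apply_zero_apply_one (m : ℕ) (H : Fin (m + 2) → Fin (m + 2) → M)
    (hH : ∀ j, H j j = 0) :
    ∑ σ : Perm (Fin (m + 2)), H (σ 0) (σ 1) = m ! • ∑ j, ∑ l, H j l := by
  rw [← decomposeFin.symm.sum_comp, Fintype.sum_prod_type, smul_sum]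
  refine sum_congr rfl fun p _ => ?_
  -- `decomposeFin.symm (p, e)` sends `0 ↦ p` and `1 ↦ swap 0 p (e 0).succ`.
  simp only [decomposeFin_symm_apply_zero, decomposeFin_symm_apply_one]
  rw [sum_perm_apply_zero m fun q => H p (swap 0 p q.succ), ← sum_swap_zero_succ_add (H p) p,
    hH, zero_add]

theorem eq_one_or_eq_swap_of_forall_apply_succ_succ {m : ℕ} (ρ : Perm (Fin (m + 2)))
    (hρ : ∀ i : Fin m, ρ i.succ.succ = i.succ.succ) : ρ = 1 ∨ ρ = swap 0 1 := by
  have hlow : ∀ j, j = 0 ∨ j = 1 → ρ j = 0 ∨ ρ j = 1 := by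
    rintro j hj
    rcases Fin.eq_zero_or_eq_succ (ρ j) with h | ⟨k, hk⟩
    · exact Or.inl h
    rcases Fin.eq_zero_or_eq_succ k with rfl | ⟨i, rfl⟩
    · exact Or.inr hk
    · obtain rfl := ρ.injective (hk.trans (hρ i).symm)
      simp [Fin.ext_iff] at hj
  have h01 : ρ 0 ≠ ρ 1 := ρ.injective.ne (by simp)
  rcases hlow 0 (by simp) with h0 | h0 <;> rcases hlow 1 (by simp) with h1 | h1 <;>
    simp only [h0, h1, ne_eq, not_true_eq_false, zero_ne_one, one_ne_zero] at h01
  · left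
    exact Equiv.ext (Fin.cases h0 (Fin.cases h1 fun i => hρ i))
  · right
    refine Equiv.ext (Fin.cases h0 (Fin.cases h1 fun i => ?_))
    rw [hρ, swap_apply_of_ne_of_ne] <;> simp [Fin.ext_iff]

end PermSums

theorem mixedDisc_eq_sum_sign_mul_prod {n : ℕ} (A : Fin n → Matrix (Fin n) (Fin n) ℂ) :
    mixedDisc A = ∑ σ : Perm (Fin n), ∑ ρ : Perm (Fin n),
      ((sign ρ : ℤ) : ℂ) * ∏ i, A i (σ i) (σ (ρ i)) := by
  refine sum_congr rfl fun σ _ => ?_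
  rw [← Equiv.sum_comp (Equiv.mulLeft σ)]
  refine sum_congr rfl fun ρ _ => ?_
  simp only [coe_mulLeft, ← mul_assoc, map_mul, Int.units_mul_self, one_mul, coe_mul,
    Function.comp_apply]

theorem sum_sign_mul_prod_of_tail_eq_smul_one {m : ℕ}
    (A : Fin (m + 2) → Matrix (Fin (m + 2)) (Fin (m + 2)) ℂ) (c : ℂ)
    (htail : ∀ i : Fin m, A i.succ.succ = c • 1) (σ : Perm (Fin (m + 2))) :
    ∑ ρ : Perm (Fin (m + 2)), ((sign ρ : ℤ) : ℂ) * ∏ i, A i (σ i) (σ (ρ i)) =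
      c ^ m * (A 0 (σ 0) (σ 0) * A 1 (σ 1) (σ 1) - A 0 (σ 0) (σ 1) * A 1 (σ 1) (σ 0)) := by
  have htail_apply : ∀ (i : Fin m) (a b : Fin (m + 2)),
      A i.succ.succ (σ a) (σ b) = if a = b then c else 0 := by
    intro i a b
    simp [htail, Matrix.one_apply, σ.injective.eq_iff]
  have hprod : ∀ ρ : Perm (Fin (m + 2)), ∏ i, A i (σ i) (σ (ρ i)) =
      A 0 (σ 0) (σ (ρ 0)) * A 1 (σ 1) (σ (ρ 1)) *
        ∏ i : Fin m, if i.succ.succ = ρ i.succ.succ then c else 0 := by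
    intro ρ
    simp only [Fin.prod_univ_succ, Fin.succ_zero_eq_one, htail_apply, mul_assoc]
  have hvanish : ∀ ρ ∉ ({1, swap 0 1} : Finset (Perm (Fin (m + 2)))),
      ((sign ρ : ℤ) : ℂ) * ∏ i, A i (σ i) (σ (ρ i)) = 0 := by
    intro ρ hρ
    obtain ⟨i, hi⟩ : ∃ i : Fin m, ρ i.succ.succ ≠ i.succ.succ := by
      by_contra! h
      simp only [mem_insert, mem_singleton] at hρ
      rcases eq_one_or_eq_swap_of_forall_apply_succ_succ ρ h with h | h <;> simp [h] at hρ
    rw [hprod, prod_eq_zero (mem_univ i) (if_neg (Ne.symm hi)), mul_zero, mul_zero]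
  have hswap : ∀ i : Fin m, swap (0 : Fin (m + 2)) 1 i.succ.succ = i.succ.succ := fun i =>
    swap_apply_of_ne_of_ne (Fin.succ_ne_zero _) (by simp [Fin.ext_iff])
  rw [← sum_subset (subset_univ _) fun ρ _ hρ => hvanish ρ hρ,
    sum_pair (by simp [Equiv.ext_iff, Fin.forall_fin_succ] : (1 : Perm (Fin (m + 2))) ≠ swap 0 1),
    hprod, hprod]
  simp [hswap, prod_const]
  ring

theorem trace_mul_trace_sub_trace_mul {n : Type*} [Fintype n] {R : Type*} [CommRing R]
    (B C : Matrix n n R) :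
    B.trace * C.trace - (B * C).trace = ∑ j, ∑ l, (B j j * C l l - B j l * C l j) := by
  simp only [Matrix.trace, Matrix.diag, Matrix.mul_apply, sum_mul_sum, ← sum_sub_distrib]

theorem mixedDisc_of_tail_eq_smul_one {m : ℕ}
    (A : Fin (m + 2) → Matrix (Fin (m + 2)) (Fin (m + 2)) ℂ) (c : ℂ)
    (htail : ∀ i : Fin m, A i.succ.succ = c • 1) :
    mixedDisc A = c ^ m * m ! * ((A 0).trace * (A 1).trace - (A 0 * A 1).trace) := by
  simp only [mixedDisc_eq_sum_sign_mul_prod, sum_sign_mul_prod_of_tail_eq_smul_one A c htail,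
    ← mul_sum, trace_mul_trace_sub_trace_mul]
  rw [sum_perm_apply_zero_apply_one m (fun j l => A 0 j j * A 1 l l - A 0 j l * A 1 l j)
    fun j => sub_self _, nsmul_eq_mul, mul_assoc]

/-- For a doubly stochastic tuple `A = (A₁, A₂, (1/n)I, …, (1/n)I)` (so that `A₁, A₂` are
positive semidefinite with trace `1` and `A₁ + A₂ = (2/n)I`), the mixed discriminant equals
`n!/nⁿ + ((n-2)!/n^{n-2}) · tr((A₁ - (1/n)I)(A₁ - (1/n)I)*)`. -/
theorem mixedDisc_two_perturbed_identity {n : ℕ} (hn : 2 ≤ n)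
    (A : Fin n → Matrix (Fin n) (Fin n) ℂ)
    (hA : DoublyStochasticTuple A)
    (htail : ∀ i : Fin n, 2 ≤ (i : ℕ) →
      A i = (n : ℂ)⁻¹ • (1 : Matrix (Fin n) (Fin n) ℂ)) :
    mixedDisc A =
      (((n ! : ℝ) / (n : ℝ) ^ n : ℝ) : ℂ) +
        ((((n - 2)! : ℝ) / (n : ℝ) ^ (n - 2) : ℝ) : ℂ) *
          ((A ⟨0, by omega⟩ - (n : ℂ)⁻¹ • (1 : Matrix (Fin n) (Fin n) ℂ)) *
            (A ⟨0, by omega⟩ - (n : ℂ)⁻¹ • (1 : Matrix (Fin n) (Fin n) ℂ))ᴴ).trace := by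
  obtain ⟨m, rfl⟩ := Nat.exists_eq_add_of_le' hn
  rw [show (⟨0, by omega⟩ : Fin (m + 2)) = 0 from rfl, Nat.add_sub_cancel]
  obtain ⟨hpsd, htr, hsum⟩ := hA
  set c : ℂ := ((m + 2 : ℕ) : ℂ)⁻¹ with hc
  have hscalar : ∀ i : Fin m, A i.succ.succ = c • 1 := fun i => htail _ (by simp)
  have hsum' : A 0 + A 1 + (m * c) • 1 = 1 := by
    simpa only [Fin.sum_univ_succ, Fin.succ_zero_eq_one, hscalar, sum_const,
      Finset.card_fin, ← Nat.cast_smul_eq_nsmul ℂ, smul_smul, add_assoc] using hsum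
  have hA1 : A 1 = 1 - (m * c) • 1 - A 0 := by
    calc A 1 = A 0 + A 1 + (m * c) • 1 - (m * c) • 1 - A 0 := by abel
      _ = _ := by rw [hsum']
  have hherm : (A 0 - c • 1)ᴴ = A 0 - c • 1 := by
    rw [conjTranspose_sub, (hpsd 0).1, conjTranspose_smul, conjTranspose_one, hc, star_inv₀,
      star_natCast]
  rw [mixedDisc_of_tail_eq_smul_one A c hscalar, htr 0, htr 1, hA1, hherm]
  simp only [mul_sub, sub_mul, Matrix.mul_smul, Matrix.smul_mul, mul_one, one_mul, trace_sub,
    trace_smul, trace_one, htr 0, Fintype.card_fin, smul_eq_mul]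
  rw [hc, Nat.factorial_succ, Nat.factorial_succ]
  push_cast
  simp only [inv_pow]
  field_simp
  ring
end

section
/- (Eulerian matrix identity) For any n-tuple A = (A_1,…,A_n) of hermitian n×n complex matrices, Σ_{i=1}^n A_i Q_i = D(A_1,…,A_n)·I; equivalently, Σ_{i=1}^n ⟨Q_i ω, A_i ω⟩ = D(A_1,…,A_n)·⟨ω,ω⟩ for every ω ∈ C^n. -/
/-! Expanding the sum over `σ` as a determinant, `D(A) = Σ_τ sgn τ · det N_τ`, where row `i` of
`N_τ` is column `τ i` of `Aᵢ`. Testing `Qᵢ` against the matrix whose only nonzero row is row `a`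
of `Aᵢ`, placed in row `c`, turns `(Aᵢ Qᵢ) a c` into a sum of cofactors of the `N_τ`, and summing
over `i` gives `Σ_τ sgn τ · (adj N_τ · N_τ) c a = δ_{ac} D(A)`. For hermitian `Aᵢ` the number
`D(A)` is real, so taking adjoints yields `Σᵢ Qᵢᴴ Aᵢ = D(A) · 1`, which is the quadratic-form
version. -/

open Matrix BigOperators Finset ComplexOrder Nat

section

variable {n : ℕ}

def permColMatrix (A : Fin n → Matrix (Fin n) (Fin n) ℂ) (τ : Equiv.Perm (Fin n)) :
    Matrix (Fin n) (Fin n) ℂ :=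
  of fun i k => A i k (τ i)

lemma mixedDisc_eq_sum_det (A : Fin n → Matrix (Fin n) (Fin n) ℂ) :
    mixedDisc A =
      ∑ τ : Equiv.Perm (Fin n), (Equiv.Perm.sign τ : ℂ) * (permColMatrix A τ).det := by
  rw [mixedDisc, Finset.sum_comm]
  refine Finset.sum_congr rfl fun τ _ => ?_
  rw [← det_transpose, det_apply', Finset.mul_sum]
  refine Finset.sum_congr rfl fun σ _ => ?_
  simp only [Equiv.Perm.sign_mul, Units.val_mul, Int.cast_mul, permColMatrix, transpose_apply,
    of_apply]
  ring

lemma permColMatrix_update (A : Fin n → Matrix (Fin n) (Fin n) ℂ) (τ : Equiv.Perm (Fin n))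
    (i : Fin n) (X : Matrix (Fin n) (Fin n) ℂ) :
    permColMatrix (Function.update A i X) τ =
      (permColMatrix A τ).updateRow i (fun k => X k (τ i)) := by
  ext j k
  rcases eq_or_ne j i with rfl | h
  · simp [permColMatrix]
  · simp [permColMatrix, h]

lemma mixedDisc_update_vecMulVec (A : Fin n → Matrix (Fin n) (Fin n) ℂ) (i c : Fin n)
    (r : Fin n → ℂ) :
    mixedDisc (Function.update A i (vecMulVec (Pi.single c 1) r)) =
      ∑ τ : Equiv.Perm (Fin n),
        (Equiv.Perm.sign τ : ℂ) * (adjugate (permColMatrix A τ) c i * r (τ i)) := by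
  rw [mixedDisc_eq_sum_det]
  refine Finset.sum_congr rfl fun τ _ => ?_
  have hrow : (fun k => vecMulVec (Pi.single c 1) r k (τ i)) = r (τ i) • Pi.single c 1 := by
    ext k; simp [vecMulVec_apply, mul_comm]
  rw [permColMatrix_update, hrow, det_updateRow_smul, adjugate_apply, mul_comm (r (τ i))]

lemma trace_vecMulVec_single_mul {m R : Type*} [Fintype m] [DecidableEq m] [CommSemiring R]
    (c : m) (r : m → R) (Q : Matrix m m R) :
    (vecMulVec (Pi.single c 1) r * Q).trace = (r ᵥ* Q) c := by
  rw [vecMulVec_mul, trace_vecMulVec, single_one_dotProduct]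

theorem sum_mul_eq_mixedDisc_smul_one (A Q : Fin n → Matrix (Fin n) (Fin n) ℂ)
    (hQ : ∀ (i : Fin n) (X : Matrix (Fin n) (Fin n) ℂ),
      mixedDisc (Function.update A i X) = (X * Q i).trace) :
    ∑ i, A i * Q i = mixedDisc A • (1 : Matrix (Fin n) (Fin n) ℂ) := by
  ext a c
  have hentry : ∀ i, (A i * Q i) a c =
      mixedDisc (Function.update A i (vecMulVec (Pi.single c 1) (A i a))) := fun i => by
    rw [hQ, trace_vecMulVec_single_mul]; rfl
  calc (∑ i, A i * Q i) a c
      = ∑ τ : Equiv.Perm (Fin n), (Equiv.Perm.sign τ : ℂ) *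
          (adjugate (permColMatrix A τ) * permColMatrix A τ) c a := by
        simp only [Matrix.sum_apply, hentry, mixedDisc_update_vecMulVec, mul_apply,
          Finset.mul_sum]
        exact Finset.sum_comm
    _ = (mixedDisc A • (1 : Matrix (Fin n) (Fin n) ℂ)) a c := by
        simp only [adjugate_mul, Matrix.smul_apply, one_apply, eq_comm (a := c), smul_eq_mul,
          mixedDisc_eq_sum_det, Finset.sum_mul, mul_assoc]

lemma mixedDisc_conjTranspose (A : Fin n → Matrix (Fin n) (Fin n) ℂ) :
    mixedDisc (fun i => (A i)ᴴ) = star (mixedDisc A) := by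
  simp only [mixedDisc, star_sum, star_mul', star_prod, star_intCast, conjTranspose_apply]
  rw [Finset.sum_comm]
  refine Finset.sum_congr rfl fun σ _ => Finset.sum_congr rfl fun τ _ => ?_
  rw [Equiv.Perm.sign_mul, Equiv.Perm.sign_mul, mul_comm (Equiv.Perm.sign τ)]

lemma star_mixedDisc_of_isHermitian {A : Fin n → Matrix (Fin n) (Fin n) ℂ}
    (hA : ∀ i, (A i).IsHermitian) : star (mixedDisc A) = mixedDisc A := by
  rw [← mixedDisc_conjTranspose]
  exact congrArg mixedDisc (funext hA)

lemma cInner_mulVec_mulVec (M N : Matrix (Fin n) (Fin n) ℂ) (ω : Fin n → ℂ) :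
    cInner (M *ᵥ ω) (N *ᵥ ω) = cInner ω ((Mᴴ * N) *ᵥ ω) := by
  rw [cInner, cInner, star_mulVec, ← dotProduct_mulVec, mulVec_mulVec]

end

/-- Eulerian matrix identity: for an `n`-tuple `A` of hermitian matrices, with `Q i` the
matrix satisfying `D(A₁,…,A_{i-1},X,A_{i+1},…,Aₙ) = tr(X·Q i)` for all `X`, one has
`Σᵢ Aᵢ Qᵢ = D(A)·I`; equivalently `Σᵢ ⟨Qᵢ ω, Aᵢ ω⟩ = D(A)·⟨ω,ω⟩` for all `ω ∈ ℂⁿ`. -/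
theorem eulerian_matrix_identity {n : ℕ}
    (A Q : Fin n → Matrix (Fin n) (Fin n) ℂ)
    (hA : ∀ i, (A i).IsHermitian)
    (hQ : ∀ (i : Fin n) (X : Matrix (Fin n) (Fin n) ℂ),
      mixedDisc (Function.update A i X) = (X * Q i).trace) :
    (∑ i, A i * Q i) = mixedDisc A • (1 : Matrix (Fin n) (Fin n) ℂ) ∧
    (∀ ω : Fin n → ℂ,
      ∑ i, cInner ((Q i).mulVec ω) ((A i).mulVec ω) = mixedDisc A * cInner ω ω) := by
  have hsum := sum_mul_eq_mixedDisc_smul_one A Q hQ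
  have hsum_adj : ∑ i, (Q i)ᴴ * A i = mixedDisc A • (1 : Matrix (Fin n) (Fin n) ℂ) := by
    calc ∑ i, (Q i)ᴴ * A i = (∑ i, A i * Q i)ᴴ := by
          simp only [conjTranspose_sum, conjTranspose_mul, (hA _).eq]
      _ = mixedDisc A • (1 : Matrix (Fin n) (Fin n) ℂ) := by
          rw [hsum, conjTranspose_smul, conjTranspose_one, star_mixedDisc_of_isHermitian hA]
  refine ⟨hsum, fun ω => ?_⟩
  calc ∑ i, cInner (Q i *ᵥ ω) (A i *ᵥ ω) = cInner ω ((∑ i, (Q i)ᴴ * A i) *ᵥ ω) := by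
        simp only [cInner_mulVec_mulVec]
        simp only [cInner, sum_mulVec, dotProduct_sum]
    _ = mixedDisc A * cInner ω ω := by
        rw [hsum_adj, smul_mulVec, one_mulVec, cInner, cInner, dotProduct_smul, smul_eq_mul]
end

section
/- Let A = (A_1,…,A_n) be a doubly stochastic n-tuple, and write each A_i in block form with respect to the orthogonal decomposition C^n = Im(A_i) ⊕ Ker(A_i), so the (1,1) block of A_i is positive definite and the other blocks vanish. Define the cone K_0 of admissible directions as the set of hermitian n-tuples (Z_1,…,Z_n) such that (A_1+εZ_1,…,A_n+εZ_n) is doubly stochastic for some ε > 0; let K_1 be the set of hermitian n-tuples (B_1,…,B_n) whose (2,2) blocks B_{i;2,2} are positive semidefinite with Im(B_{i;2,1}) ⊆ Im(B_{i;2,2}); let K_2 be the set of hermitian n-tuples whose (2,2) blocks are positive semidefinite; and let K_3 be the set of hermitian n-tuples (C_1,…,C_n) with tr(C_i) = 0 for all i and C_1+⋯+C_n = 0. Then: (1) K_0 = K_1 ∩ K_3; (2) the closure of K_1 equals K_2; (3) the closure of K_0 equals K_2 ∩ K_3. -/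
open Matrix BigOperators Finset ComplexOrder Nat

/-- A tuple consisting of hermitian matrices. -/
def HermitianTuple {n : ℕ} (B : Fin n → Matrix (Fin n) (Fin n) ℂ) : Prop :=
  ∀ i, (B i).IsHermitian

/-- The cone `K₀` of admissible directions at `A`: hermitian tuples `Z` such that
`A + εZ` is doubly stochastic for some `ε > 0`. -/
def K0 {n : ℕ} (A : Fin n → Matrix (Fin n) (Fin n) ℂ) :
    Set (Fin n → Matrix (Fin n) (Fin n) ℂ) :=
  {Z | HermitianTuple Z ∧ ∃ ε : ℝ, 0 < ε ∧
    DoublyStochasticTuple (fun i => A i + (ε : ℂ) • Z i)}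

/-- The cone `K₁`, expressed via the orthogonal projections `π i` onto `Ker (A i)`:
hermitian tuples `B` whose `(2,2)` blocks `π i * B i * π i` (the compressions to `Ker (A i)`)
are positive semidefinite and whose `(2,1)` blocks `π i * B i * (1 - π i)` have range
contained in the range of the `(2,2)` block. -/
def K1 {n : ℕ} (π : Fin n → Matrix (Fin n) (Fin n) ℂ) :
    Set (Fin n → Matrix (Fin n) (Fin n) ℂ) :=
  {B | HermitianTuple B ∧ ∀ i, (π i * B i * π i).PosSemidef ∧
    LinearMap.range (π i * B i * (1 - π i)).mulVecLin ≤
      LinearMap.range (π i * B i * π i).mulVecLin}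

/-- The cone `K₂`: hermitian tuples `B` whose `(2,2)` blocks `π i * B i * π i` are positive
semidefinite. -/
def K2 {n : ℕ} (π : Fin n → Matrix (Fin n) (Fin n) ℂ) :
    Set (Fin n → Matrix (Fin n) (Fin n) ℂ) :=
  {B | HermitianTuple B ∧ ∀ i, (π i * B i * π i).PosSemidef}

/-- The linear subspace `K₃`: hermitian tuples with traceless entries summing to zero. -/
def K3 {n : ℕ} : Set (Fin n → Matrix (Fin n) (Fin n) ℂ) :=
  {C | HermitianTuple C ∧ (∀ i, (C i).trace = 0) ∧ ∑ i, C i = 0}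

/-!
Only positivity of each `A i + ε Z i` is at stake in `K₀`: the trace and sum conditions on
`A + εZ` say exactly that `Z ∈ K₃`. Compressing by the projection `π` onto `Ker A` kills `A`, so
`A + εZ ⪰ 0` forces `π Z π ⪰ 0`, and the range condition follows because every positive `P`
satisfies `Im (π P (1 - π)) ⊆ Im (π P π)` (write `P = Cᴴ C`). Conversely, if
`π Z (1 - π) = M W` with `M = π Z π` and `V = W (1 - π)`, then
`A + εZ = (1 - π) (A + π + ε (Z - Wᴴ M W)) (1 - π) + ε (1 + V)ᴴ M (1 + V)`,
and `A + π` is positive definite, so the first summand stays positive for small `ε`.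

For the closures, `B + t π`, resp. `B + t (1 - n A)` (which stays in `K₃`), has `(2,2)` block
`π B π + t π` whose range is all of `Im π`, so it lies in `K₁`, resp. `K₀`, for every `t > 0`.
-/

open Filter Topology

lemma IsStrictlyPositive.exists_pos_nonneg_add_smul {A : Type*} [CStarAlgebra A] [PartialOrder A]
    [StarOrderedRing A] {a b : A} (ha : IsStrictlyPositive a) (hb : IsSelfAdjoint b) :
    ∃ ε : ℝ, 0 < ε ∧ 0 ≤ a + ε • b := by
  rcases subsingleton_or_nontrivial A with _ | _
  · exact ⟨1, one_pos, (Subsingleton.elim _ _).le⟩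
  obtain ⟨r, hr, hra⟩ : ∃ r > 0, algebraMap ℝ A r ≤ a :=
    (CFC.exists_pos_algebraMap_le_iff ha.isSelfAdjoint).2 fun x hx ↦ ha.spectrum_pos hx
  set ε := r / (‖b‖ + 1)
  have hεb : ‖ε • b‖ ≤ r := by
    rw [norm_smul, Real.norm_of_nonneg (by positivity), div_mul_eq_mul_div,
      div_le_iff₀ (by positivity)]
    nlinarith [norm_nonneg b]
  refine ⟨ε, by positivity, ?_⟩
  calc (0 : A) = algebraMap ℝ A r + -algebraMap ℝ A r := (add_neg_cancel _).symm
    _ ≤ a + ε • b := by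
      gcongr
      calc -algebraMap ℝ A r ≤ -algebraMap ℝ A ‖ε • b‖ := by gcongr
        _ ≤ ε • b := (IsSelfAdjoint.all ε |>.smul hb).neg_algebraMap_norm_le_self

lemma mem_closure_of_forall_add_smul_mem {E : Type*} [AddCommGroup E] [Module ℝ E]
    [TopologicalSpace E] [ContinuousAdd E] [ContinuousSMul ℝ E] {S : Set E} {b d : E}
    (h : ∀ t : ℝ, 0 < t → b + t • d ∈ S) : b ∈ closure S := by
  have hlim : Tendsto (fun t : ℝ => b + t • d) (𝓝[>] 0) (𝓝 b) := by
    have : Continuous fun t : ℝ => b + t • d := by fun_prop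
    simpa using (this.tendsto 0).mono_left nhdsWithin_le_nhds
  exact mem_closure_of_tendsto hlim (eventually_nhdsWithin_of_forall h)

namespace Matrix

variable {m l : Type*}

lemma PosSemidef.add_smul_of_le {A Z : Matrix m m ℂ} (hA : A.PosSemidef) {ε δ : ℝ}
    (hε : (A + (ε : ℂ) • Z).PosSemidef) (hδ : 0 ≤ δ) (hδε : δ ≤ ε) :
    (A + (δ : ℂ) • Z).PosSemidef := by
  rcases hδ.eq_or_lt with rfl | hδ
  · simpa using hA
  have hε0 : 0 < ε := hδ.trans_le hδε
  have hconv : A + (δ : ℂ) • Z = (1 - δ / ε) • A + (δ / ε) • (A + (ε : ℂ) • Z) := by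
    simp only [smul_add, Complex.coe_smul, smul_smul, div_mul_cancel₀ _ hε0.ne']
    module
  rw [hconv]
  exact (hA.smul (by rw [sub_nonneg, div_le_one hε0]; exact hδε)).add (hε.smul (by positivity))

lemma isClosed_setOf_isHermitian : IsClosed {M : Matrix m m ℂ | M.IsHermitian} :=
  isClosed_eq continuous_id.matrix_conjTranspose continuous_id

variable [Fintype m] [Fintype l]

open scoped MatrixOrder Matrix.Norms.L2Operator in
lemma PosDef.exists_pos_posSemidef_add_smul [DecidableEq m] {P N : Matrix m m ℂ} (hP : P.PosDef)
    (hN : N.IsHermitian) : ∃ ε : ℝ, 0 < ε ∧ (P + (ε : ℂ) • N).PosSemidef := by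
  obtain ⟨ε, hε, h⟩ := hP.isStrictlyPositive.exists_pos_nonneg_add_smul hN.isSelfAdjoint
  exact ⟨ε, hε, by rwa [Complex.coe_smul, ← nonneg_iff_posSemidef]⟩

lemma isClosed_setOf_posSemidef : IsClosed {M : Matrix m m ℂ | M.PosSemidef} := by
  simp_rw [posSemidef_iff_dotProduct_mulVec, Set.ofPred_and, Set.ofPred_forall]
  exact isClosed_setOf_isHermitian.inter
    (isClosed_iInter fun x => isClosed_le continuous_const (by fun_prop))

lemma _root_.IsStarProjection.posSemidef {π : Matrix m m ℂ} (hπ : IsStarProjection π) :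
    π.PosSemidef := by
  have h : πᴴ * π = π := by
    rw [← star_eq_conjTranspose, hπ.isSelfAdjoint.star_eq, hπ.isIdempotentElem.eq]
  exact h ▸ posSemidef_conjTranspose_mul_self π

lemma range_mulVecLin_mul_le_left {R : Type*} [CommSemiring R] (X : Matrix m l R)
    (Y : Matrix l m R) : LinearMap.range (X * Y).mulVecLin ≤ LinearMap.range X.mulVecLin := by
  rw [mulVecLin_mul]
  exact LinearMap.range_comp_le_range _ _

lemma range_mulVecLin_smul {X : Matrix m m ℂ} {c : ℂ} (hc : c ≠ 0) :
    LinearMap.range (c • X).mulVecLin = LinearMap.range X.mulVecLin := by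
  rw [show (c • X).mulVecLin = c • X.mulVecLin from LinearMap.ext fun v => smul_mulVec c X v,
    LinearMap.range_smul _ c hc]

lemma range_mulVecLin_conjTranspose_mul_self (D : Matrix l m ℂ) :
    LinearMap.range (Dᴴ * D).mulVecLin = LinearMap.range Dᴴ.mulVecLin :=
  Submodule.eq_of_le_of_finrank_le (range_mulVecLin_mul_le_left _ _) <| by
    change Dᴴ.rank ≤ (Dᴴ * D).rank
    rw [rank_conjTranspose_mul_self, rank_conjTranspose]

lemma range_mulVecLin_eq_of_le_of_ker_le {K : Type*} [Field K] {X Y : Matrix m m K}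
    (hrange : LinearMap.range X.mulVecLin ≤ LinearMap.range Y.mulVecLin)
    (hker : LinearMap.ker X.mulVecLin ≤ LinearMap.ker Y.mulVecLin) :
    LinearMap.range X.mulVecLin = LinearMap.range Y.mulVecLin :=
  Submodule.eq_of_le_of_finrank_le hrange <| by
    have := X.mulVecLin.finrank_range_add_finrank_ker
    have := Y.mulVecLin.finrank_range_add_finrank_ker
    have := Submodule.finrank_mono hker
    omega

lemma exists_mul_eq_of_range_le [DecidableEq m] {R : Type*} [CommSemiring R] {M : Matrix m l R}
    {N : Matrix m m R}
    (h : LinearMap.range N.mulVecLin ≤ LinearMap.range M.mulVecLin) :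
    ∃ W : Matrix l m R, M * W = N := by
  choose w hw using fun j => h (LinearMap.mem_range_self N.mulVecLin (Pi.single j 1))
  refine ⟨(of w)ᵀ, ?_⟩
  ext i j
  have hwij := congrFun (hw j) i
  rw [mulVecLin_apply, mulVecLin_apply, mulVec_single_one] at hwij
  simpa [mulVec, dotProduct, mul_apply] using hwij

lemma PosSemidef.ker_add_le_right {P Q : Matrix m m ℂ} (hP : P.PosSemidef) (hQ : Q.PosSemidef) :
    LinearMap.ker (P + Q).mulVecLin ≤ LinearMap.ker Q.mulVecLin := by
  intro v hv
  rw [LinearMap.mem_ker, mulVecLin_apply] at hv ⊢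
  rw [← hQ.dotProduct_mulVec_zero_iff]
  have hsum : star v ⬝ᵥ P *ᵥ v + star v ⬝ᵥ Q *ᵥ v = 0 := by
    rw [← dotProduct_add, ← add_mulVec, hv, dotProduct_zero]
  exact ((add_eq_zero_iff_of_nonneg (hP.dotProduct_mulVec_nonneg v)
    (hQ.dotProduct_mulVec_nonneg v)).mp hsum).2

open scoped MatrixOrder Matrix.Norms.L2Operator in
lemma PosSemidef.range_mulVecLin_mul_mul_le [DecidableEq m] {P π : Matrix m m ℂ}
    (hP : P.PosSemidef) (hπ : π.IsHermitian) (ρ : Matrix m m ℂ) :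
    LinearMap.range (π * P * ρ).mulVecLin ≤ LinearMap.range (π * P * π).mulVecLin := by
  obtain ⟨C, rfl⟩ := CStarAlgebra.nonneg_iff_eq_star_mul_self.mp hP.nonneg
  have hsplit : ∀ σ, π * (star C * C) * σ = (C * π)ᴴ * (C * σ) := fun σ => by
    rw [conjTranspose_mul, hπ.eq, star_eq_conjTranspose]
    simp only [mul_assoc]
  rw [hsplit, hsplit, range_mulVecLin_conjTranspose_mul_self]
  exact range_mulVecLin_mul_le_left _ _

end Matrix

section Blocks

variable {m : Type*} [Fintype m]

/-- For positive semidefinite `A`, this characterizes `π` as the orthogonal projection onto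
`Ker A`. -/
def IsKerProjection (A π : Matrix m m ℂ) : Prop :=
  π.IsHermitian ∧ π * π = π ∧ A * π = 0 ∧ (A + π).PosDef

namespace IsKerProjection

variable {A π : Matrix m m ℂ}

lemma isStarProjection (h : IsKerProjection A π) : IsStarProjection π :=
  ⟨h.2.1, h.1⟩

lemma proj_mul_eq_zero (h : IsKerProjection A π) : π * A = 0 := by
  have hA : A.IsHermitian := by simpa using h.2.2.2.isHermitian.sub h.1
  simpa [conjTranspose_mul, hA.eq, h.1.eq] using congrArg conjTranspose h.2.2.1

variable [DecidableEq m]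

lemma conj_one_sub_add_eq (h : IsKerProjection A π) : (1 - π) * (A + π) * (1 - π) = A := by
  simp [sub_mul, mul_sub, mul_add, h.2.2.1, h.proj_mul_eq_zero, h.2.1]

lemma posSemidef (h : IsKerProjection A π) : A.PosSemidef := by
  have hρ : (1 - π)ᴴ = 1 - π := h.isStarProjection.one_sub.isSelfAdjoint
  have hconj := h.2.2.2.posSemidef.conjTranspose_mul_mul_same (1 - π)
  rwa [hρ, h.conj_one_sub_add_eq] at hconj

end IsKerProjection

variable [DecidableEq m]

def BlockAdmissible (π B : Matrix m m ℂ) : Prop :=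
  (π * B * π).PosSemidef ∧
    LinearMap.range (π * B * (1 - π)).mulVecLin ≤ LinearMap.range (π * B * π).mulVecLin

variable {A π B D Z : Matrix m m ℂ}

lemma blockAdmissible_of_posSemidef_add_smul (hπ : π.IsHermitian) (hπA : π * A = 0) {ε : ℝ}
    (hε : 0 < ε) (h : (A + (ε : ℂ) • Z).PosSemidef) : BlockAdmissible π Z := by
  have hε' : (ε : ℂ) ≠ 0 := Complex.ofReal_ne_zero.mpr hε.ne'
  have hπP : ∀ σ, π * (A + (ε : ℂ) • Z) * σ = (ε : ℂ) • (π * Z * σ) := fun σ => by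
    rw [mul_add, hπA, zero_add, mul_smul_comm, smul_mul_assoc]
  refine ⟨?_, ?_⟩
  · have h22 := (h.conjTranspose_mul_mul_same π).smul
      (inv_nonneg.mpr (Complex.zero_le_real.mpr hε.le))
    rwa [hπ.eq, hπP, smul_smul, inv_mul_cancel₀ hε', one_smul] at h22
  · rw [← range_mulVecLin_smul hε' (X := π * Z * (1 - π)),
      ← range_mulVecLin_smul hε' (X := π * Z * π), ← hπP, ← hπP]
    exact h.range_mulVecLin_mul_mul_le hπ _

lemma IsKerProjection.add_smul_eq_conj_add_conj (h : IsKerProjection A π) (hZ : Z.IsHermitian)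
    {W : Matrix m m ℂ} (hW : π * Z * π * W = π * Z * (1 - π)) (δ : ℂ) :
    A + δ • Z = (1 - π) * (A + π + δ • (Z - Wᴴ * (π * Z * π) * W)) * (1 - π) +
      δ • ((1 + W * (1 - π))ᴴ * (π * Z * π) * (1 + W * (1 - π))) := by
  have hπh : πᴴ = π := h.1
  have hρ := h.isStarProjection.one_sub
  have hρh : (1 - π)ᴴ = 1 - π := hρ.isSelfAdjoint
  have hMh : (π * Z * π)ᴴ = π * Z * π := by
    simpa only [hπh] using (isHermitian_conjTranspose_mul_mul π hZ).eq
  set M := π * Z * π with hM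
  set V := W * (1 - π) with hV
  have hMV : M * V = π * Z * (1 - π) := by
    rw [hV, ← mul_assoc, hW, mul_assoc, hρ.isIdempotentElem.eq]
  have hVM : Vᴴ * M = (1 - π) * Z * π := by
    simpa [conjTranspose_mul, hMh, hZ.eq, hπh, hρh, mul_assoc] using congrArg conjTranspose hMV
  have hZ' : (1 - π) * (Z - Wᴴ * M * W) * (1 - π) + (1 + V)ᴴ * M * (1 + V) = Z := by
    calc _ = (1 - π) * Z * (1 - π) + M + M * V + Vᴴ * M := by
          rw [conjTranspose_add, conjTranspose_one, hV, conjTranspose_mul, hρh]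
          noncomm_ring
      _ = Z := by
          rw [hMV, hVM, hM]
          noncomm_ring
  calc A + δ • Z = (1 - π) * (A + π) * (1 - π) +
        δ • ((1 - π) * (Z - Wᴴ * M * W) * (1 - π) + (1 + V)ᴴ * M * (1 + V)) := by
        rw [h.conj_one_sub_add_eq, hZ']
    _ = _ := by
        simp only [mul_add, add_mul, smul_add, mul_smul_comm, smul_mul_assoc, add_assoc]

lemma IsKerProjection.eventually_posSemidef_add_smul (h : IsKerProjection A π)
    (hZ : Z.IsHermitian) (hadm : BlockAdmissible π Z) :
    ∀ᶠ ε : ℝ in 𝓝[>] 0, (A + (ε : ℂ) • Z).PosSemidef := by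
  obtain ⟨W, hW⟩ := exists_mul_eq_of_range_le hadm.2
  obtain ⟨ε, hε, hpsd⟩ := h.2.2.2.exists_pos_posSemidef_add_smul
    (hZ.sub (hadm.1.conjTranspose_mul_mul_same W).isHermitian)
  have hεpsd : (A + (ε : ℂ) • Z).PosSemidef := by
    have hρh : (1 - π)ᴴ = 1 - π := h.isStarProjection.one_sub.isSelfAdjoint
    have h1 := hpsd.conjTranspose_mul_mul_same (1 - π)
    rw [hρh] at h1
    have h2 := (hadm.1.conjTranspose_mul_mul_same (1 + W * (1 - π))).smul
      (Complex.zero_le_real.mpr hε.le)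
    rw [h.add_smul_eq_conj_add_conj hZ hW]
    exact h1.add h2
  filter_upwards [Ioc_mem_nhdsGT hε] with δ hδ
  exact h.posSemidef.add_smul_of_le hεpsd hδ.1.le hδ.2

lemma blockAdmissible_add_smul (hπ : IsStarProjection π) (hB : (π * B * π).PosSemidef)
    (hD : π * D = π) {t : ℝ} (ht : 0 < t) : BlockAdmissible π (B + t • D) := by
  have h22 : π * (B + t • D) * π = π * B * π + t • π := by
    rw [mul_add, mul_smul_comm, hD, add_mul, smul_mul_assoc, hπ.isIdempotentElem.eq]
  have h21 : π * (B + t • D) * (1 - π) = π * B * (1 - π) := by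
    rw [mul_add, mul_smul_comm, hD, add_mul, smul_mul_assoc, hπ.mul_one_sub_self, smul_zero,
      add_zero]
  have htπ := hπ.posSemidef.smul ht.le
  refine ⟨by rw [h22]; exact hB.add htπ, ?_⟩
  rw [h21, h22, range_mulVecLin_eq_of_le_of_ker_le (X := π * B * π + t • π) (Y := π)]
  · rw [mul_assoc]
    exact range_mulVecLin_mul_le_left π (B * (1 - π))
  · rw [show π * B * π + t • π = π * (B * π + t • 1) by
      rw [mul_add, mul_smul_comm, mul_one, mul_assoc]]
    exact range_mulVecLin_mul_le_left π (B * π + t • 1)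
  · refine (hB.ker_add_le_right htπ).trans fun v hv => ?_
    rw [LinearMap.mem_ker, mulVecLin_apply] at hv ⊢
    rw [smul_mulVec, smul_eq_zero] at hv
    exact hv.resolve_left ht.ne'

end Blocks

section Cones

variable {n : ℕ} {A π B D : Fin n → Matrix (Fin n) (Fin n) ℂ}

lemma isClosed_K2 (π : Fin n → Matrix (Fin n) (Fin n) ℂ) : IsClosed (K2 π) := by
  have hK2 : K2 π = ⋂ i, ((fun B => B i) ⁻¹' {M | M.IsHermitian} ∩
      (fun B => π i * B i * π i) ⁻¹' {M | M.PosSemidef}) := by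
    ext B
    simp [K2, HermitianTuple, forall_and]
  rw [hK2]
  exact isClosed_iInter fun i => (isClosed_setOf_isHermitian.preimage (continuous_apply i)).inter
    (isClosed_setOf_posSemidef.preimage (by fun_prop))

lemma isClosed_K3 : IsClosed (K3 (n := n)) := by
  have hK3 : K3 (n := n) = (⋂ i, ((fun B => B i) ⁻¹' {M | M.IsHermitian} ∩
      (fun B => (B i).trace) ⁻¹' {0})) ∩ (fun B => ∑ i, B i) ⁻¹' {0} := by
    ext B
    simp [K3, HermitianTuple, forall_and, and_assoc]
  rw [hK3]
  exact (isClosed_iInter fun i => (isClosed_setOf_isHermitian.preimage (continuous_apply i)).inter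
    (isClosed_singleton.preimage (by fun_prop))).inter (isClosed_singleton.preimage (by fun_prop))

lemma add_smul_mem_K1 (hπ : ∀ i, IsStarProjection (π i)) (hB : B ∈ K2 π)
    (hD : HermitianTuple D) (hπD : ∀ i, π i * D i = π i) {t : ℝ} (ht : 0 < t) :
    B + t • D ∈ K1 π :=
  ⟨fun i => (hB.1 i).add ((hD i).smul (IsSelfAdjoint.all t)),
    fun i => blockAdmissible_add_smul (hπ i) (hB.2 i) (hπD i) ht⟩

lemma add_smul_mem_K3 (hB : B ∈ K3) (hD : D ∈ K3) (t : ℝ) : B + t • D ∈ K3 := by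
  refine ⟨fun i => (hB.1 i).add ((hD.1 i).smul (IsSelfAdjoint.all t)), fun i => ?_, ?_⟩
  · simp [trace_add, trace_smul, hB.2.1 i, hD.2.1 i]
  · simp [sum_add_distrib, ← smul_sum, hB.2.2, hD.2.2]

lemma DoublyStochasticTuple.one_sub_smul_mem_K3 (hA : DoublyStochasticTuple A) :
    (fun i => 1 - (n : ℝ) • A i) ∈ K3 := by
  refine ⟨fun i => isHermitian_one.sub ((hA.1 i).isHermitian.smul (IsSelfAdjoint.all _)),
    fun i => ?_, ?_⟩
  · simp [trace_smul, hA.2.1 i]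
  · rw [sum_sub_distrib, ← smul_sum, hA.2.2]
    simp [Nat.cast_smul_eq_nsmul]

lemma DoublyStochasticTuple.add_smul_iff (hA : DoublyStochasticTuple A) {ε : ℝ} (hε : ε ≠ 0)
    (Z : Fin n → Matrix (Fin n) (Fin n) ℂ) :
    DoublyStochasticTuple (fun i => A i + (ε : ℂ) • Z i) ↔
      (∀ i, (A i + (ε : ℂ) • Z i).PosSemidef) ∧ (∀ i, (Z i).trace = 0) ∧ ∑ i, Z i = 0 := by
  simp [DoublyStochasticTuple, trace_add, hA.2.1, sum_add_distrib, hA.2.2, ← smul_sum, hε]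

theorem K0_eq_K1_inter_K3 (hA : DoublyStochasticTuple A)
    (hπ : ∀ i, IsKerProjection (A i) (π i)) : K0 A = K1 π ∩ K3 := by
  ext Z
  constructor
  · rintro ⟨hZ, ε, hε, hAZ⟩
    rw [hA.add_smul_iff hε.ne'] at hAZ
    exact ⟨⟨hZ, fun i => blockAdmissible_of_posSemidef_add_smul (hπ i).1
      (hπ i).proj_mul_eq_zero hε (hAZ.1 i)⟩, hZ, hAZ.2⟩
  · rintro ⟨⟨hZ, hadm⟩, -, hK3⟩
    obtain ⟨ε, hpsd, hε⟩ := ((eventually_all.2 fun i =>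
      (hπ i).eventually_posSemidef_add_smul (hZ i) (hadm i)).and self_mem_nhdsWithin).exists
    exact ⟨hZ, ε, hε, (hA.add_smul_iff hε.ne' Z).2 ⟨hpsd, hK3⟩⟩

lemma K1_subset_K2 : K1 π ⊆ K2 π :=
  fun _ hB => ⟨hB.1, fun i => (hB.2 i).1⟩

theorem closure_K1_eq_K2 (hπ : ∀ i, IsStarProjection (π i)) : closure (K1 π) = K2 π :=
  (closure_minimal K1_subset_K2 (isClosed_K2 π)).antisymm
    fun _ hB => mem_closure_of_forall_add_smul_mem fun _ ht =>
      add_smul_mem_K1 hπ hB (fun i => (hπ i).isSelfAdjoint) (fun i => (hπ i).isIdempotentElem) ht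

theorem closure_K0_eq_K2_inter_K3 (hA : DoublyStochasticTuple A)
    (hπ : ∀ i, IsKerProjection (A i) (π i)) : closure (K0 A) = K2 π ∩ K3 := by
  have hproj i := (hπ i).isStarProjection
  rw [K0_eq_K1_inter_K3 hA hπ]
  refine ((closure_inter_subset_inter_closure _ _).trans_eq ?_).antisymm ?_
  · rw [closure_K1_eq_K2 hproj, isClosed_K3.closure_eq]
  rintro B ⟨hB2, hB3⟩
  have hD := hA.one_sub_smul_mem_K3
  have hπD i : π i * (1 - (n : ℝ) • A i) = π i := by
    rw [mul_sub, mul_one, mul_smul_comm, (hπ i).proj_mul_eq_zero, smul_zero, sub_zero]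
  exact mem_closure_of_forall_add_smul_mem fun t ht =>
    ⟨add_smul_mem_K1 hproj hB2 hD.1 hπD ht, add_smul_mem_K3 hB3 hD t⟩

end Cones

/-- For a doubly stochastic tuple `A`, with `π i` the orthogonal projection onto `Ker (A i)`
(so block decompositions are with respect to `ℂⁿ = Im (A i) ⊕ Ker (A i)`):
(1) `K₀ = K₁ ∩ K₃`; (2) `closure K₁ = K₂`; (3) `closure K₀ = K₂ ∩ K₃`. -/
theorem admissible_cone_description {n : ℕ}
    (A π : Fin n → Matrix (Fin n) (Fin n) ℂ)
    (hA : DoublyStochasticTuple A)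
    (hπ : ∀ i, (π i).IsHermitian ∧ π i * π i = π i ∧ A i * π i = 0 ∧
      (A i + π i).PosDef) :
    K0 A = K1 π ∩ K3 ∧
    closure (K1 π) = K2 π ∧
    closure (K0 A) = K2 π ∩ K3 :=
  ⟨K0_eq_K1_inter_K3 hA hπ, closure_K1_eq_K2 fun i => IsKerProjection.isStarProjection (hπ i),
    closure_K0_eq_K2_inter_K3 hA hπ⟩
end

section
/- If A = (A_1,…,A_n) is a doubly stochastic n-tuple of positive semidefinite hermitian matrices, then its mixed discriminant is strictly positive: D(A_1,…,A_n) > 0. -/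
/-!
Diagonalise `A i = ∑ₖ λᵢₖ vᵢₖ vᵢₖ*`. Expanding the products in the definition of `D` gives
`D(A) = ∑_k (∏ᵢ λ_{i,k i}) |det [v_{1,k 1}, …, v_{n,k n}]|²`, a sum of nonnegative terms, so it
suffices to choose for each `i` an eigenvector of `A i` with nonzero eigenvalue such that the
chosen vectors are linearly independent. By Rado's theorem such a choice exists once, for every
set `S` of indices, these eigenvectors of the `A i` with `i ∈ S` span at least `|S|` dimensions.
They span the range of `B = ∑_{i ∈ S} A i`, and `0 ≤ B ≤ 1` forces `rank B ≥ tr B = |S|`.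
-/

open Matrix BigOperators Finset ComplexOrder Nat

section Rado

open Submodule Module Function

variable {K V ι κ : Type*} [Field K] [AddCommGroup V] [Module K V]

theorem update_erase_subset [DecidableEq ι] [DecidableEq κ] (f : ι → Finset κ) (i : ι) (z : κ)
    (j : ι) : update f i ((f i).erase z) j ⊆ f j := by
  rcases eq_or_ne j i with rfl | hj
  · simpa using erase_subset z (f j)
  · simp [hj]

variable (K) in
def RadoCondition (w : ι → κ → V) (f : ι → Finset κ) : Prop :=
  ∀ s : Finset ι, #s ≤ finrank K (span K (⋃ i ∈ s, w i '' f i))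

namespace RadoCondition

variable {w : ι → κ → V} {f : ι → Finset κ}

theorem nonempty (h : RadoCondition K w f) (i : ι) : (f i).Nonempty := by
  by_contra hi
  have := h {i}
  rw [set_biUnion_singleton, not_nonempty_iff_eq_empty.1 hi, coe_empty, Set.image_empty,
    span_empty, finrank_bot, Finset.card_singleton] at this
  omega

theorem linearIndependent_of_forall_eq_singleton [Fintype ι] {g : ι → κ} (h : RadoCondition K w f)
    (hg : ∀ i, f i = {g i}) : LinearIndependent K fun i => w i (g i) := by
  have hspan : (⋃ i ∈ (univ : Finset ι), w i '' f i) = Set.range fun i => w i (g i) := by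
    simp only [hg, coe_singleton, Set.image_singleton, mem_univ, Set.iUnion_true,
      Set.range_eq_iUnion]
  rw [linearIndependent_iff_card_eq_finrank_span]
  refine le_antisymm ?_ (finrank_range_le_card _)
  have := h univ
  rwa [hspan, Finset.card_univ] at this

theorem exists_finrank_le_of_not_update [DecidableEq ι] (h : RadoCondition K w f) {i : ι}
    {t : Finset κ} (ht : ¬ RadoCondition K w (update f i t)) :
    ∃ s : Finset ι, i ∉ s ∧ finrank K (span K ((⋃ j ∈ s, w j '' f j) ∪ w i '' t)) ≤ #s := by
  have hout (s : Finset ι) (hs : i ∉ s) :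
      ⋃ j ∈ s, w j '' update f i t j = ⋃ j ∈ s, w j '' f j :=
    Set.iUnion₂_congr fun j hj => by rw [update_of_ne (ne_of_mem_of_not_mem hj hs)]
  simp only [RadoCondition, not_forall, not_le] at ht
  obtain ⟨s, hs⟩ := ht
  have hi : i ∈ s := by
    by_contra hi
    exact (h s).not_gt (by rwa [hout s hi] at hs)
  refine ⟨s.erase i, notMem_erase i s, ?_⟩
  rw [← insert_erase hi, set_biUnion_insert, update_self, hout _ (notMem_erase i s),
    Set.union_comm, card_insert_of_notMem (notMem_erase i s)] at hs
  omega

theorem update_erase_or [DecidableEq ι] [DecidableEq κ] (h : RadoCondition K w f) {i : ι}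
    {x y : κ} (hx : x ∈ f i) (hxy : x ≠ y) :
    RadoCondition K w (update f i ((f i).erase x)) ∨
      RadoCondition K w (update f i ((f i).erase y)) := by
  by_contra! ⟨hnx, hny⟩
  obtain ⟨s, his, hs⟩ := h.exists_finrank_le_of_not_update hnx
  obtain ⟨t, hit, ht⟩ := h.exists_finrank_le_of_not_update hny
  set P := span K ((⋃ j ∈ s, w j '' f j) ∪ w i '' (f i).erase x)
  set Q := span K ((⋃ j ∈ t, w j '' f j) ∪ w i '' (f i).erase y)
  have : FiniteDimensional K P := FiniteDimensional.span_of_finite K (Set.toFinite _)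
  have : FiniteDimensional K Q := FiniteDimensional.span_of_finite K (Set.toFinite _)
  -- Submodularity: `dim (P ⊔ Q) + dim (P ⊓ Q) = dim P + dim Q ≤ #s + #t`, while `P ⊔ Q` (which
  -- contains `w i x ∈ Q` as `x ≠ y`) and `P ⊓ Q` contain the spans for `insert i (s ∪ t)` and
  -- `s ∩ t`, whose cardinalities add up to `#s + #t + 1`.
  have hsup : span K (⋃ j ∈ insert i (s ∪ t), w j '' f j) ≤ P ⊔ Q := by
    rw [← span_union]
    refine span_mono ?_
    rw [set_biUnion_insert, set_biUnion_union]
    rintro _ (⟨z, hz, rfl⟩ | hv | hv)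
    · rcases eq_or_ne z x with rfl | hzx
      · exact Or.inr (Or.inr ⟨z, mem_erase.2 ⟨hxy, hz⟩, rfl⟩)
      · exact Or.inl (Or.inr ⟨z, mem_erase.2 ⟨hzx, hz⟩, rfl⟩)
    · exact Or.inl (Or.inl hv)
    · exact Or.inr (Or.inl hv)
  have hinf : span K (⋃ j ∈ s ∩ t, w j '' f j) ≤ P ⊓ Q := by
    refine le_inf (span_mono ?_) (span_mono ?_) <;> refine Set.subset_union_of_subset_left
      (Set.iUnion₂_subset fun j hj => subset_set_biUnion_of_mem (f := fun j => w j '' f j) ?_) _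
    exacts [(mem_inter.1 hj).1, (mem_inter.1 hj).2]
  have h₁ := (h (insert i (s ∪ t))).trans (finrank_mono hsup)
  have h₂ := (h (s ∩ t)).trans (finrank_mono hinf)
  have := finrank_sup_add_finrank_inf_eq P Q
  have := card_union_add_card_inter s t
  rw [card_insert_of_notMem (by simp [his, hit])] at h₁
  omega

/-- **Rado's theorem** for vector families. -/
theorem exists_linearIndependent [Fintype ι] [DecidableEq ι] [DecidableEq κ]
    (h : RadoCondition K w f) :
    ∃ g : ι → κ, (∀ i, g i ∈ f i) ∧ LinearIndependent K fun i => w i (g i) := by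
  induction hN : ∑ i, #(f i) using Nat.strong_induction_on generalizing f with
  | _ N ih =>
  by_cases hsingle : ∀ i, #(f i) ≤ 1
  · choose g hg using fun i => card_eq_one.1 <| (hsingle i).antisymm (h.nonempty i).card_pos
    exact ⟨g, fun i => by simp [hg], h.linearIndependent_of_forall_eq_singleton hg⟩
  obtain ⟨i, hi⟩ := not_forall.1 hsingle
  obtain ⟨x, hx, y, hy, hxy⟩ := one_lt_card.1 (not_le.1 hi)
  have erase_step (z : κ) (hz : z ∈ f i) (hz' : RadoCondition K w (update f i ((f i).erase z))) :
      ∃ g : ι → κ, (∀ i, g i ∈ f i) ∧ LinearIndependent K fun i => w i (g i) := by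
    have hlt : ∑ j, #(update f i ((f i).erase z) j) < N :=
      hN ▸ sum_lt_sum (fun j _ => card_le_card (update_erase_subset f i z j))
        ⟨i, mem_univ i, by simpa using card_erase_lt_of_mem hz⟩
    obtain ⟨g, hg, hli⟩ := ih _ hlt hz' rfl
    exact ⟨g, fun j => update_erase_subset f i z j (hg j), hli⟩
  rcases h.update_erase_or hx hxy with h' | h'
  exacts [erase_step x hx h', erase_step y hy h']

end RadoCondition

end Rado

namespace Matrix.IsHermitian

open Submodule

variable {𝕜 n : Type*} [RCLike 𝕜] [Fintype n] [DecidableEq n] {A : Matrix n n 𝕜}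

theorem apply_eq_sum_eigenvalues (hA : A.IsHermitian) (x y : n) :
    A x y = ∑ k, (hA.eigenvalues k : 𝕜) * hA.eigenvectorBasis k x *
      star (hA.eigenvectorBasis k y) := by
  conv_lhs => rw [hA.spectral_theorem, Unitary.conjStarAlgAut_apply]
  rw [mul_apply]
  simp only [mul_diagonal, star_apply, eigenvectorUnitary_apply, Function.comp_apply]
  exact sum_congr rfl fun k _ => by ring

theorem mulVec_eq_sum_eigenvalues (hA : A.IsHermitian) (v : n → 𝕜) :
    A *ᵥ v = ∑ k, ((hA.eigenvalues k : 𝕜) * (star ⇑(hA.eigenvectorBasis k) ⬝ᵥ v)) •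
      ⇑(hA.eigenvectorBasis k) := by
  ext x
  simp only [mulVec, dotProduct, hA.apply_eq_sum_eigenvalues, Finset.sum_apply, Pi.smul_apply,
    smul_eq_mul, sum_mul, mul_sum, Pi.star_apply]
  rw [sum_comm]
  exact sum_congr rfl fun k _ => sum_congr rfl fun y _ => by ring

theorem mulVec_mem_span_eigenvectors (hA : A.IsHermitian) (v : n → 𝕜) :
    A *ᵥ v ∈ span 𝕜
      ((fun k => ⇑(hA.eigenvectorBasis k)) '' ↑({k | hA.eigenvalues k ≠ 0} : Finset n)) := by
  rw [hA.mulVec_eq_sum_eigenvalues]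
  refine sum_mem fun k _ => ?_
  by_cases hk : hA.eigenvalues k = 0
  · simp [hk]
  · exact smul_mem _ _ (subset_span ⟨k, by simpa using hk, rfl⟩)

theorem eigenvalues_le_one (hA : A.IsHermitian) (h : (1 - A).PosSemidef) (k : n) :
    hA.eigenvalues k ≤ 1 := by
  have hunit : star ⇑(hA.eigenvectorBasis k) ⬝ᵥ ⇑(hA.eigenvectorBasis k) = 1 := by
    rw [dotProduct_comm, ← EuclideanSpace.inner_eq_star_dotProduct, inner_self_eq_norm_sq_to_K,
      hA.eigenvectorBasis.orthonormal.1 k]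
    simp
  have := h.re_dotProduct_nonneg (hA.eigenvectorBasis k)
  rw [sub_mulVec, one_mulVec, dotProduct_sub, map_sub, hunit, ← hA.eigenvalues_eq k] at this
  simpa using this

theorem re_trace_le_rank (hA : A.IsHermitian) (h : (1 - A).PosSemidef) :
    RCLike.re A.trace ≤ A.rank := by
  rw [hA.trace_eq_sum_eigenvalues, hA.rank_eq_card_non_zero_eigs, Fintype.card_subtype,
    map_sum]
  simp only [RCLike.ofReal_re]
  rw [← sum_filter_ne_zero]
  simpa using sum_le_sum fun k (_ : k ∈ ({k | hA.eigenvalues k ≠ 0} : Finset n)) =>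
    hA.eigenvalues_le_one h k

end Matrix.IsHermitian

open Complex ComplexConjugate in
theorem mixedDisc_eq_sum_prod_mul_normSq_det {n : ℕ} {A : Fin n → Matrix (Fin n) (Fin n) ℂ}
    (c : Fin n → Fin n → ℝ) (v : Fin n → Fin n → Fin n → ℂ)
    (hA : ∀ i x y, A i x y = ∑ k, (c i k : ℂ) * v i k x * conj (v i k y)) :
    mixedDisc A =
      ↑(∑ k : Fin n → Fin n, (∏ i, c i (k i)) * normSq (of fun x i => v i (k i) x).det) := by
  have hdet (k : Fin n → Fin n) : (of fun x i => v i (k i) x).det =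
      ∑ σ : Equiv.Perm (Fin n), (Equiv.Perm.sign σ : ℂ) * ∏ i, v i (k i) (σ i) := by
    rw [det_apply']
    rfl
  have hterm (k : Fin n → Fin n) :
      (((∏ i, c i (k i)) * normSq (of fun x i => v i (k i) x).det : ℝ) : ℂ) =
        ∑ σ : Equiv.Perm (Fin n), ∑ τ : Equiv.Perm (Fin n), (Equiv.Perm.sign (σ * τ) : ℂ) *
          ∏ i, ((c i (k i) : ℂ) * v i (k i) (σ i) * conj (v i (k i) (τ i))) := by
    rw [ofReal_mul, ← mul_conj, hdet, map_sum, sum_mul_sum, mul_sum]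
    refine sum_congr rfl fun σ _ => ?_
    rw [mul_sum]
    refine sum_congr rfl fun τ _ => ?_
    simp only [map_mul, map_prod, map_intCast, prod_mul_distrib, Units.val_mul,
      Int.cast_mul, ofReal_prod]
    ring
  simp only [ofReal_sum, hterm, mixedDisc, hA, prod_univ_sum, Fintype.piFinset_univ, mul_sum]
  exact (sum_congr rfl fun σ _ => sum_comm).trans sum_comm

theorem mixedDisc_pos_of_linearIndependent_eigenvectors {n : ℕ}
    {A : Fin n → Matrix (Fin n) (Fin n) ℂ} (hA : ∀ i, (A i).PosSemidef) (k : Fin n → Fin n)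
    (hk : ∀ i, (hA i).1.eigenvalues (k i) ≠ 0)
    (hli : LinearIndependent ℂ fun i => ⇑((hA i).1.eigenvectorBasis (k i))) :
    0 < mixedDisc A := by
  rw [mixedDisc_eq_sum_prod_mul_normSq_det _ _ fun i => (hA i).1.apply_eq_sum_eigenvalues,
    Complex.zero_lt_real]
  refine sum_pos' (fun k' _ => ?_) ⟨k, mem_univ k, mul_pos ?_ ?_⟩
  · exact mul_nonneg (prod_nonneg fun i _ => (hA i).eigenvalues_nonneg _) (Complex.normSq_nonneg _)
  · exact prod_pos fun i _ => ((hA i).eigenvalues_nonneg _).lt_of_ne' (hk i)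
  · rw [Complex.normSq_pos, ← isUnit_iff_ne_zero, ← isUnit_iff_isUnit_det]
    exact linearIndependent_cols_iff_isUnit.1 hli

open Submodule in
theorem DoublyStochasticTuple.radoCondition {n : ℕ} {A : Fin n → Matrix (Fin n) (Fin n) ℂ}
    (hA : DoublyStochasticTuple A) :
    RadoCondition ℂ (fun i k => ⇑((hA.1 i).1.eigenvectorBasis k))
      fun i => {k | (hA.1 i).1.eigenvalues k ≠ 0} := by
  intro s
  set B := ∑ i ∈ s, A i
  have hB : B.IsHermitian := (posSemidef_sum s fun i _ => hA.1 i).1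
  have h1B : (1 - B).PosSemidef := by
    rw [← hA.2.2, ← sum_add_sum_compl s, add_sub_cancel_left]
    exact posSemidef_sum _ fun i _ => hA.1 i
  have htrB : RCLike.re B.trace = #s := by simp [B, trace_sum, hA.2.1]
  have hrange : LinearMap.range B.mulVecLin ≤ span ℂ (⋃ i ∈ s,
      (fun k => ⇑((hA.1 i).1.eigenvectorBasis k)) ''
        ↑({k | (hA.1 i).1.eigenvalues k ≠ 0} : Finset (Fin n))) := by
    rintro _ ⟨v, rfl⟩
    rw [mulVecLin_apply, sum_mulVec]
    exact sum_mem fun i hi => span_mono (subset_set_biUnion_of_mem hi)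
      ((hA.1 i).1.mulVec_mem_span_eigenvectors v)
  have hrank : B.rank ≤ _ := finrank_mono hrange
  exact_mod_cast htrB ▸ (hB.re_trace_le_rank h1B).trans (Nat.cast_le.2 hrank)

/-- The mixed discriminant of a doubly stochastic tuple is strictly positive. -/
theorem mixedDisc_pos_of_doublyStochastic {n : ℕ}
    (A : Fin n → Matrix (Fin n) (Fin n) ℂ) (hA : DoublyStochasticTuple A) :
    (0 : ℂ) < mixedDisc A := by
  obtain ⟨k, hk, hli⟩ := hA.radoCondition.exists_linearIndependent
  exact mixedDisc_pos_of_linearIndependent_eigenvectors hA.1 k (fun i => (mem_filter.1 (hk i)).2)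
    hli
end

section
/- Let A = (A_1,…,A_n) be an n-tuple of positive semidefinite hermitian n×n matrices, and let α, α^1,…,α^m ∈ L_n satisfy α = Σ_{j=1}^m γ_j α^j with γ_j ≥ 0 and Σ γ_j = 1. Then the capacity is log-concave along such convex combinations: Cap^{(α)} ≥ Π_{j=1}^m (Cap^{(α^j)})^{γ_j}. -/
open Matrix BigOperators Finset ComplexOrder Nat

/-- The capacity of a tuple of positive semidefinite hermitian matrices:
`Cap(B) = inf { det (Σ xᵢ Bᵢ) : xᵢ > 0, Π xᵢ = 1 }`. -/
noncomputable def capacity {n : ℕ} (A : Fin n → Matrix (Fin n) (Fin n) ℂ) : ℝ :=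
  sInf {y : ℝ | ∃ x : Fin n → ℝ, (∀ i, 0 < x i) ∧ (∏ i, x i = 1) ∧
    y = ((∑ i, (x i : ℂ) • A i).det).re}

/-! For weights `z > 0`, giving each copy of `Aᵢ` the weight `zᵢ` and rescaling shows
`Cap^{(α)} ≤ det (∑ᵢ αᵢ zᵢ Aᵢ) / ∏ᵢ zᵢ ^ αᵢ`, and AM-GM on the blocks of equal matrices shows
that `Cap^{(α)}` is the infimum of these bounds over `z`. For fixed `z` the logarithm of the bound is
concave in `α`, because `log det` is concave on positive semidefinite matrices and
`∑ᵢ αᵢ log zᵢ` is linear; an infimum of concave functions is concave. -/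

namespace Matrix

variable {𝕜 ι : Type*} [RCLike 𝕜] [Fintype ι] [DecidableEq ι]

theorem IsHermitian.det_smul_one_add_smul {X : Matrix ι ι 𝕜} (hX : X.IsHermitian) (a b : ℝ) :
    (a • 1 + b • X).det = ∏ i, ((a + b * hX.eigenvalues i : ℝ) : 𝕜) := by
  set U : Matrix ι ι 𝕜 := (hX.eigenvectorUnitary : Matrix ι ι 𝕜)
  have hU : U * star U = 1 := Unitary.mul_star_self_of_mem hX.eigenvectorUnitary.2
  have hdiag : diagonal (fun i => ((a + b * hX.eigenvalues i : ℝ) : 𝕜)) =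
      a • 1 + b • diagonal (RCLike.ofReal ∘ hX.eigenvalues) := by
    ext i j
    rcases eq_or_ne i j with rfl | hij
    · simp [RCLike.real_smul_eq_coe_mul]
    · simp [hij]
  have hconj : a • 1 + b • X =
      U * diagonal (fun i => ((a + b * hX.eigenvalues i : ℝ) : 𝕜)) * star U := by
    conv_lhs => rw [hX.spectral_theorem, Unitary.conjStarAlgAut_apply]
    rw [hdiag, Matrix.mul_add, Matrix.add_mul, Matrix.mul_smul, Matrix.smul_mul, mul_one, hU,
      Matrix.mul_smul, Matrix.smul_mul]
  rw [hconj, det_mul, det_mul, mul_right_comm, ← det_mul, hU, det_one, one_mul, det_diagonal]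

theorem PosSemidef.re_det_nonneg {M : Matrix ι ι 𝕜} (hM : M.PosSemidef) :
    0 ≤ RCLike.re M.det :=
  (RCLike.nonneg_iff.mp hM.det_nonneg).1

theorem PosSemidef.re_det_rpow_le_re_det_smul_one_add_smul {X : Matrix ι ι 𝕜}
    (hX : X.PosSemidef) {a b : ℝ} (ha : 0 ≤ a) (hb : 0 ≤ b) (hab : a + b = 1) :
    RCLike.re X.det ^ b ≤ RCLike.re (a • 1 + b • X).det := by
  have hev := hX.eigenvalues_nonneg
  rw [hX.1.det_smul_one_add_smul, hX.1.det_eq_prod_eigenvalues, ← RCLike.ofReal_prod,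
    ← RCLike.ofReal_prod, RCLike.ofReal_re, RCLike.ofReal_re,
    ← Real.finsetProd_rpow _ _ fun i _ => hev i]
  refine Finset.prod_le_prod (fun i _ => Real.rpow_nonneg (hev i) _) fun i _ => ?_
  simpa using Real.geom_mean_le_arith_mean2_weighted ha hb zero_le_one (hev i) hab

theorem det_star_mul_mul_self (B Y : Matrix ι ι 𝕜) :
    (star B * Y * B).det = (‖B.det‖ ^ 2 : ℝ) * Y.det := by
  rw [det_mul, det_mul, star_eq_conjTranspose, det_conjTranspose, mul_right_comm,
    RCLike.star_def, RCLike.conj_mul]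
  push_cast
  ring

theorem PosSemidef.re_det_rpow_mul_re_det_rpow_le {M N : Matrix ι ι 𝕜} (hM : M.PosSemidef)
    (hN : N.PosSemidef) {a b : ℝ} (ha : 0 ≤ a) (hb : 0 ≤ b) (hab : a + b = 1) :
    RCLike.re M.det ^ a * RCLike.re N.det ^ b ≤ RCLike.re (a • M + b • N).det := by
  rcases ha.eq_or_lt with rfl | ha
  · obtain rfl : b = 1 := by linarith
    simp
  rcases hM.re_det_nonneg.eq_or_lt with hM0 | hMpos
  · rw [← hM0, Real.zero_rpow ha.ne', zero_mul]
    exact ((hM.smul ha.le).add (hN.smul hb)).re_det_nonneg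
  -- Congruence by a factor `B` of `M = Bᴴ B` reduces to the case `M = 1`.
  obtain ⟨B, rfl⟩ : ∃ B, M = star B * B := by
    open scoped MatrixOrder in exact CStarAlgebra.nonneg_iff_eq_star_mul_self.mp hM.nonneg
  set d : ℝ := ‖B.det‖ ^ 2
  have hd : RCLike.re (star B * B).det = d := by
    simpa using congrArg RCLike.re (det_star_mul_mul_self B 1)
  rw [hd] at hMpos
  have hB : B.det ≠ 0 := by
    rintro h0
    simp [d, h0] at hMpos
  have hBinv : B⁻¹ * B = 1 := nonsing_inv_mul _ (isUnit_iff_ne_zero.mpr hB)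
  set X := star B⁻¹ * N * B⁻¹
  have hX : X.PosSemidef := hN.conjTranspose_mul_mul_same B⁻¹
  have hNX : N = star B * X * B := by
    simp only [X, Matrix.mul_assoc, hBinv, mul_one]
    rw [← Matrix.mul_assoc, ← star_mul, hBinv, star_one, one_mul]
  clear_value X
  subst hNX
  have hsum : a • (star B * B) + b • (star B * X * B) = star B * (a • 1 + b • X) * B := by
    rw [Matrix.mul_add, Matrix.add_mul, Matrix.mul_smul, Matrix.smul_mul, mul_one,
      Matrix.mul_smul, Matrix.smul_mul]
  rw [hd, hsum, det_star_mul_mul_self, det_star_mul_mul_self, RCLike.re_ofReal_mul,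
    RCLike.re_ofReal_mul, Real.mul_rpow hMpos.le hX.re_det_nonneg, ← mul_assoc,
    ← Real.rpow_add hMpos, hab, Real.rpow_one]
  exact mul_le_mul_of_nonneg_left (hX.re_det_rpow_le_re_det_smul_one_add_smul ha.le hb hab) hMpos.le

theorem prod_re_det_rpow_le_re_det_sum {κ : Type*} (s : Finset κ) {M : κ → Matrix ι ι 𝕜}
    (hM : ∀ j ∈ s, (M j).PosSemidef) {γ : κ → ℝ} (hγ : ∀ j ∈ s, 0 ≤ γ j)
    (hγ1 : ∑ j ∈ s, γ j = 1) :
    ∏ j ∈ s, RCLike.re (M j).det ^ γ j ≤ RCLike.re (∑ j ∈ s, γ j • M j).det := by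
  classical
  induction s using Finset.induction generalizing γ with
  | empty => simp at hγ1
  | insert a s ha ih =>
    simp only [Finset.mem_insert, forall_eq_or_imp] at hM hγ
    rw [Finset.sum_insert ha] at hγ1
    rw [Finset.prod_insert ha, Finset.sum_insert ha]
    set c := ∑ j ∈ s, γ j
    have hc : 0 ≤ c := Finset.sum_nonneg hγ.2
    set N := ∑ j ∈ s, (γ j / c) • M j
    have hN : N.PosSemidef :=
      posSemidef_sum s fun j hj => (hM.2 j hj).smul (div_nonneg (hγ.2 j hj) hc)
    obtain ⟨hcN, hprod⟩ : ∑ j ∈ s, γ j • M j = c • N ∧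
        ∏ j ∈ s, RCLike.re (M j).det ^ γ j ≤ RCLike.re N.det ^ c := by
      rcases hc.eq_or_lt with hc0 | hc0
      · have hγ0 := (Finset.sum_eq_zero_iff_of_nonneg hγ.2).mp hc0.symm
        rw [← hc0, zero_smul, Real.rpow_zero]
        exact ⟨Finset.sum_eq_zero fun j hj => by rw [hγ0 j hj, zero_smul],
          (Finset.prod_eq_one fun j hj => by rw [hγ0 j hj, Real.rpow_zero]).le⟩
      have hdet := fun j hj => (hM.2 j hj).re_det_nonneg
      refine ⟨?_, ?_⟩
      · rw [Finset.smul_sum]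
        exact Finset.sum_congr rfl fun j _ => by rw [smul_smul, mul_div_cancel₀ _ hc0.ne']
      calc ∏ j ∈ s, RCLike.re (M j).det ^ γ j
          = (∏ j ∈ s, RCLike.re (M j).det ^ (γ j / c)) ^ c := by
            rw [← Real.finsetProd_rpow _ _ fun j hj => Real.rpow_nonneg (hdet j hj) _]
            exact Finset.prod_congr rfl fun j hj => by
              rw [← Real.rpow_mul (hdet j hj), div_mul_cancel₀ _ hc0.ne']
        _ ≤ RCLike.re N.det ^ c := by
            gcongr
            · exact Finset.prod_nonneg fun j hj => Real.rpow_nonneg (hdet j hj) _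
            · exact ih hM.2 (fun j hj => div_nonneg (hγ.2 j hj) hc) (by
                rw [← Finset.sum_div, div_self hc0.ne'])
    rw [hcN]
    calc RCLike.re (M a).det ^ γ a * ∏ j ∈ s, RCLike.re (M j).det ^ γ j
        ≤ RCLike.re (M a).det ^ γ a * RCLike.re N.det ^ c := by
          gcongr
          exact Real.rpow_nonneg hM.1.re_det_nonneg _
      _ ≤ RCLike.re (γ a • M a + c • N).det :=
          hM.1.re_det_rpow_mul_re_det_rpow_le hN hγ.1 hc hγ1

end Matrix

theorem Finset.prod_le_sum_div_card_pow {ι : Type*} (s : Finset ι) {z : ι → ℝ}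
    (hz : ∀ i ∈ s, 0 ≤ z i) : ∏ i ∈ s, z i ≤ ((∑ i ∈ s, z i) / #s) ^ #s := by
  rcases s.eq_empty_or_nonempty with rfl | hs
  · simp
  have hcard : (0 : ℝ) < #s := by exact_mod_cast hs.card_pos
  have amgm := Real.geom_mean_le_arith_mean s (fun _ => 1) z (fun _ _ => zero_le_one)
    (by simpa using hcard) hz
  simp only [Real.rpow_one, Finset.sum_const, nsmul_eq_mul, mul_one, one_mul] at amgm
  calc ∏ i ∈ s, z i = ((∏ i ∈ s, z i) ^ (#s : ℝ)⁻¹) ^ #s :=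
        (Real.rpow_inv_natCast_pow (Finset.prod_nonneg hz) hs.card_pos.ne').symm
    _ ≤ ((∑ i ∈ s, z i) / #s) ^ #s := by
        gcongr
        exact Real.rpow_nonneg (Finset.prod_nonneg hz) _

theorem Finset.sum_smul_comp_eq_sum_fiberwise {ι κ R E : Type*} [Fintype ι] [Fintype κ]
    [DecidableEq κ] [Semiring R] [AddCommMonoid E] [Module R E] (f : ι → κ) (x : ι → R)
    (v : κ → E) :
    ∑ t, x t • v (f t) = ∑ k, (∑ t with f t = k, x t) • v k := by
  rw [← Finset.sum_fiberwise Finset.univ f]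
  refine Finset.sum_congr rfl fun k _ => ?_
  rw [Finset.sum_smul]
  exact Finset.sum_congr rfl fun t ht => by rw [(Finset.mem_filter.mp ht).2]

theorem Finset.prod_comp_eq_prod_pow_card_fiber {ι κ M : Type*} [Fintype ι] [Fintype κ]
    [DecidableEq κ] [CommMonoid M] (f : ι → κ) (z : κ → M) :
    ∏ t, z (f t) = ∏ k, z k ^ #{t | f t = k} := by
  rw [← Finset.prod_fiberwise Finset.univ f]
  refine Finset.prod_congr rfl fun k _ => ?_
  rw [← Finset.prod_const]
  exact Finset.prod_congr rfl fun t ht => by rw [(Finset.mem_filter.mp ht).2]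

theorem Real.prod_pow_eq_prod_rpow_of_convex {ι κ : Type*} [Fintype ι] [Fintype κ]
    {z : ι → ℝ} (hz : ∀ i, 0 < z i) {α : ι → ℕ} {αs : κ → ι → ℕ} {γ : κ → ℝ}
    (hconv : ∀ i, (α i : ℝ) = ∑ j, γ j * αs j i) :
    ∏ i, z i ^ α i = ∏ j, (∏ i, z i ^ αs j i) ^ γ j := by
  calc ∏ i, z i ^ α i = ∏ i, ∏ j, z i ^ (γ j * αs j i) := by
        refine Finset.prod_congr rfl fun i _ => ?_
        rw [← Real.rpow_natCast, hconv, Real.rpow_sum_of_pos (hz i)]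
    _ = ∏ j, (∏ i, z i ^ αs j i) ^ γ j := by
        rw [Finset.prod_comm]
        refine Finset.prod_congr rfl fun j _ => ?_
        rw [← Real.finsetProd_rpow _ _ fun i _ => pow_nonneg (hz i).le _]
        refine Finset.prod_congr rfl fun i _ => ?_
        rw [← Real.rpow_natCast, ← Real.rpow_mul (hz i).le, mul_comm]

section Capacity

variable {n : ℕ} {B : Fin n → Matrix (Fin n) (Fin n) ℂ}

theorem re_det_sum_smul_nonneg (hB : ∀ i, (B i).PosSemidef) {x : Fin n → ℝ}
    (hx : ∀ i, 0 ≤ x i) : 0 ≤ (∑ i, x i • B i).det.re :=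
  (posSemidef_sum _ fun i _ => (hB i).smul (hx i)).re_det_nonneg

theorem capacity_nonneg (hB : ∀ i, (B i).PosSemidef) : 0 ≤ capacity B := by
  refine Real.sInf_nonneg ?_
  rintro _ ⟨x, hx, -, rfl⟩
  simpa only [Complex.coe_smul] using re_det_sum_smul_nonneg hB fun i => (hx i).le

theorem le_capacity {c : ℝ}
    (h : ∀ x : Fin n → ℝ, (∀ i, 0 < x i) → ∏ i, x i = 1 →
      c ≤ (∑ i, x i • B i).det.re) :
    c ≤ capacity B := by
  refine le_csInf ⟨_, fun _ => 1, fun _ => one_pos, by simp, rfl⟩ ?_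
  rintro _ ⟨x, hx, hx1, rfl⟩
  simpa only [Complex.coe_smul] using h x hx hx1

theorem capacity_mul_prod_le (hB : ∀ i, (B i).PosSemidef) {x : Fin n → ℝ}
    (hx : ∀ i, 0 < x i) :
    capacity B * ∏ i, x i ≤ (∑ i, x i • B i).det.re := by
  have hp : 0 < ∏ i, x i := Finset.prod_pos fun i _ => hx i
  -- `det` is homogeneous of degree `n`, so rescaling `x` to have product `1` costs `∏ x`.
  obtain ⟨s, hs, hsn⟩ : ∃ s > 0, s ^ n * ∏ i, x i = 1 := by
    rcases n.eq_zero_or_pos with rfl | hn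
    · exact ⟨1, one_pos, by simp⟩
    · refine ⟨(∏ i, x i)⁻¹ ^ (n : ℝ)⁻¹, by positivity, ?_⟩
      rw [Real.rpow_inv_natCast_pow (inv_nonneg.mpr hp.le) hn.ne', inv_mul_cancel₀ hp.ne']
  have hcap : capacity B ≤ (∑ i, (s * x i) • B i).det.re := by
    refine csInf_le ⟨0, ?_⟩ ⟨fun i => s * x i, fun i => mul_pos hs (hx i), ?_, ?_⟩
    · rintro _ ⟨y, hy, -, rfl⟩
      simpa only [Complex.coe_smul] using re_det_sum_smul_nonneg hB fun i => (hy i).le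
    · rw [Finset.prod_mul_distrib, Finset.prod_const, Finset.card_univ, Fintype.card_fin, hsn]
    · simp only [Complex.coe_smul]
  rw [Finset.sum_congr rfl fun i _ => mul_smul s (x i) (B i), ← Finset.smul_sum,
    ← Complex.coe_smul, det_smul, Fintype.card_fin, ← Complex.ofReal_pow,
    Complex.re_ofReal_mul] at hcap
  calc capacity B * ∏ i, x i ≤ s ^ n * (∑ i, x i • B i).det.re * ∏ i, x i := by gcongr
    _ = (∑ i, x i • B i).det.re := by rw [mul_right_comm, hsn, one_mul]

theorem capacity_comp_mul_prod_pow_le {A : Fin n → Matrix (Fin n) (Fin n) ℂ}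
    (hA : ∀ i, (A i).PosSemidef) {g : Fin n → Fin n} {β : Fin n → ℕ}
    (hg : ∀ i, #{t | g t = i} = β i) {z : Fin n → ℝ} (hz : ∀ i, 0 < z i) :
    capacity (A ∘ g) * ∏ i, z i ^ β i ≤ (∑ i, (β i * z i) • A i).det.re := by
  have hfib : ∀ i, ∑ t with g t = i, z (g t) = β i * z i := fun i => by
    rw [Finset.sum_congr rfl fun t ht => by rw [(Finset.mem_filter.mp ht).2], Finset.sum_const,
      hg, nsmul_eq_mul]
  have := capacity_mul_prod_le (B := A ∘ g) (fun t => hA (g t)) (x := fun t => z (g t))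
    fun t => hz _
  simpa only [Function.comp_apply, Finset.prod_comp_eq_prod_pow_card_fiber, hg,
    Finset.sum_smul_comp_eq_sum_fiberwise g, hfib] using this

theorem le_capacity_comp {A : Fin n → Matrix (Fin n) (Fin n) ℂ} {f : Fin n → Fin n}
    {α : Fin n → ℕ} (hf : ∀ i, #{t | f t = i} = α i) {c : ℝ} (hc : 0 ≤ c)
    (h : ∀ z : Fin n → ℝ, (∀ i, 0 < z i) →
      c * ∏ i, z i ^ α i ≤ (∑ i, (α i * z i) • A i).det.re) :
    c ≤ capacity (A ∘ f) := by
  refine le_capacity fun x hx hx1 => ?_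
  -- Replace `x` by its averages over the fibres of `f`; AM-GM makes the product grow.
  set y : Fin n → ℝ := fun i => ∑ t with f t = i, x t
  set z : Fin n → ℝ := fun i => if α i = 0 then 1 else y i / α i
  have hz : ∀ i, 0 < z i := fun i => by
    by_cases hi : α i = 0
    · simp [z, hi]
    · have hne : ({t | f t = i} : Finset (Fin n)).Nonempty := by
        rw [← Finset.card_pos, hf]
        exact Nat.pos_of_ne_zero hi
      simp only [z, hi, if_false]
      exact div_pos (Finset.sum_pos (fun t _ => hx t) hne) (by positivity)
  have hαz : ∀ i, α i * z i = y i := fun i => by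
    by_cases hi : α i = 0
    · have hempty : ({t | f t = i} : Finset (Fin n)) = ∅ := by
        rw [← Finset.card_eq_zero, hf, hi]
      simp [y, hi, hempty]
    · simp only [z, hi, if_false]
      exact mul_div_cancel₀ _ (by exact_mod_cast hi)
  have hzpow : ∀ i, z i ^ α i = (y i / α i) ^ α i := fun i => by
    by_cases hi : α i = 0 <;> simp [z, hi]
  have hxz : ∏ t, x t ≤ ∏ i, z i ^ α i := by
    rw [← Finset.prod_fiberwise Finset.univ f x]
    refine Finset.prod_le_prod (fun i _ => Finset.prod_nonneg fun t _ => (hx t).le) fun i _ => ?_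
    rw [hzpow, ← hf]
    exact Finset.prod_le_sum_div_card_pow _ fun t _ => (hx t).le
  calc c = c * ∏ t, x t := by rw [hx1, mul_one]
    _ ≤ c * ∏ i, z i ^ α i := by gcongr
    _ ≤ (∑ i, (α i * z i) • A i).det.re := h z hz
    _ = (∑ t, x t • (A ∘ f) t).det.re := by
        simp only [hαz, Function.comp_apply, Finset.sum_smul_comp_eq_sum_fiberwise f x A, y]

end Capacity

theorem capacity_log_concave_general {n m : ℕ}
    (A : Fin n → Matrix (Fin n) (Fin n) ℂ) (hA : ∀ i, (A i).PosSemidef)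
    (α : Fin n → ℕ) (αs : Fin m → Fin n → ℕ) (γ : Fin m → ℝ)
    (hγ : ∀ j, 0 ≤ γ j) (hγ1 : ∑ j, γ j = 1)
    (hconv : ∀ i, (α i : ℝ) = ∑ j, γ j * (αs j i : ℝ))
    (f : Fin n → Fin n)
    (hf : ∀ i, (Finset.univ.filter fun t => f t = i).card = α i)
    (g : Fin m → Fin n → Fin n)
    (hg : ∀ j i, (Finset.univ.filter fun t => g j t = i).card = αs j i) :
    ∏ j, (capacity (A ∘ g j)) ^ (γ j) ≤ capacity (A ∘ f) := by
  have hcap : ∀ j, 0 ≤ capacity (A ∘ g j) := fun j => capacity_nonneg fun t => hA _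
  refine le_capacity_comp hf (Finset.prod_nonneg fun j _ => Real.rpow_nonneg (hcap j) _)
    fun z hz => ?_
  set M : Fin m → Matrix (Fin n) (Fin n) ℂ := fun j => ∑ i, (αs j i * z i) • A i
  have hM : ∀ j, (M j).PosSemidef := fun j =>
    posSemidef_sum _ fun i _ => (hA i).smul (mul_nonneg (Nat.cast_nonneg _) (hz i).le)
  have hsum : ∑ j, γ j • M j = ∑ i, (α i * z i) • A i := by
    simp only [M, Finset.smul_sum, smul_smul]
    rw [Finset.sum_comm]
    refine Finset.sum_congr rfl fun i _ => ?_
    rw [← Finset.sum_smul, hconv, Finset.sum_mul]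
    simp only [mul_assoc]
  have hnonneg : ∀ j, 0 ≤ capacity (A ∘ g j) * ∏ i, z i ^ αs j i := fun j =>
    mul_nonneg (hcap j) (Finset.prod_nonneg fun i _ => pow_nonneg (hz i).le _)
  calc (∏ j, capacity (A ∘ g j) ^ γ j) * ∏ i, z i ^ α i
      = ∏ j, (capacity (A ∘ g j) * ∏ i, z i ^ αs j i) ^ γ j := by
        rw [Real.prod_pow_eq_prod_rpow_of_convex hz hconv, ← Finset.prod_mul_distrib]
        exact Finset.prod_congr rfl fun j _ =>
          (Real.mul_rpow (hcap j) (Finset.prod_nonneg fun i _ => pow_nonneg (hz i).le _)).symm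
    _ ≤ ∏ j, (M j).det.re ^ γ j := by
        refine Finset.prod_le_prod (fun j _ => Real.rpow_nonneg (hnonneg j) _) fun j _ => ?_
        exact Real.rpow_le_rpow (hnonneg j) (capacity_comp_mul_prod_pow_le hA (hg j) hz) (hγ j)
    _ ≤ (∑ j, γ j • M j).det.re :=
        prod_re_det_rpow_le_re_det_sum _ (fun j _ => hM j) (fun j _ => hγ j) hγ1
    _ = (∑ i, (α i * z i) • A i).det.re := by rw [hsum]

/-- Log-concavity of the capacity along convex combinations in `L_n`: if
`α = Σ_j γ_j α^j` with `γ_j ≥ 0`, `Σ γ_j = 1` and `α, α^j ∈ L_n`, then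
`Cap^{(α)} ≥ Π_j (Cap^{(α^j)})^{γ_j}`.  Here `A^{(α)}` (the tuple in which `A i` appears
with multiplicity `α i`) is realized as `A ∘ f` for any `f` whose fibre over `i` has
cardinality `α i`. -/
theorem capacity_log_concave {n m : ℕ}
    (A : Fin n → Matrix (Fin n) (Fin n) ℂ) (hA : ∀ i, (A i).PosSemidef)
    (α : Fin n → ℕ) (αs : Fin m → Fin n → ℕ) (γ : Fin m → ℝ)
    (hα : ∑ i, α i = n) (hαs : ∀ j, ∑ i, αs j i = n)
    (hγ : ∀ j, 0 ≤ γ j) (hγ1 : ∑ j, γ j = 1)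
    (hconv : ∀ i, (α i : ℝ) = ∑ j, γ j * (αs j i : ℝ))
    (f : Fin n → Fin n)
    (hf : ∀ i, (Finset.univ.filter fun t => f t = i).card = α i)
    (g : Fin m → Fin n → Fin n)
    (hg : ∀ j i, (Finset.univ.filter fun t => g j t = i).card = αs j i) :
    ∏ j, (capacity (A ∘ g j)) ^ (γ j) ≤ capacity (A ∘ f) :=
  capacity_log_concave_general A hA α αs γ hγ hγ1 hconv f hf g hg
end
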